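/- arXiv:1902.11260 — 7 statements merged into one kernel-verified Lean document; each statement's English description precedes it below -/
import Mathlib

section
/- A 3-face of the n-cube shares at most one 2-face (square) with an m-face (m ≥ 3) unless it is entirely contained in that m-face. More generally, for 3 ≤ k ≤ m, a k-face shares at most C(k-1,2)·2^(k-3) squares with an m-face or is contained in it. -/
/-- The dimension of a face of the `n`-cube, given as an element of
`{0,1,*}^n ≅ (Fin n → Option Bool)` where `none` plays the role of `*`:
the number of `*` entries. -/
def faceDim {n : ℕ} (F : Fin n → Option Bool) : ℕ :=
  (Finset.univ.filter (fun p => F p = none)).card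

/-- Face `F` is contained in face `G`: wherever `G` has a fixed bit,
`F` has the same fixed bit. -/
def faceContained {n : ℕ} (F G : Fin n → Option Bool) : Prop :=
  ∀ p b, G p = some b → F p = some b

/-!
A square `S` lying in both `D` and `E` has its two free coordinates among the coordinates
free in both, and is determined by its entries there, since every other entry is fixed by `D`
or by `E`. Counting the `j`-faces of the cube on those common free coordinates bounds the
number of shared squares by `C(a,2)·2^(a-2)`, where `a` is their number. If `D ⊄ E`, some
coordinate `p` is fixed in `E` to a bit that `D` does not have there: either `D` is free at
`p`, so `a ≤ k - 1`, or `D` and `E` fix `p` to different bits and share no face at all.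
-/

open Finset

theorem card_cubeFaces_le (ι : Type*) [Fintype ι] [DecidableEq ι] (j : ℕ) :
    Nat.card {F : ι → Option Bool // #{p | F p = none} = j}
      ≤ (Fintype.card ι).choose j * 2 ^ (Fintype.card ι - j) := by
  let encode : {F : ι → Option Bool // #{p | F p = none} = j} →
      Σ T : powersetCard j (univ : Finset ι), (↥((T : Finset ι)ᶜ) → Bool) :=
    fun F => ⟨⟨({p | F.1 p = none} : Finset ι), mem_powersetCard_univ.mpr F.2⟩,
      fun p => (F.1 p).getD false⟩
  let decode : (Σ T : powersetCard j (univ : Finset ι), (↥((T : Finset ι)ᶜ) → Bool)) →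
      ι → Option Bool :=
    fun x p => if hp : p ∈ (x.1 : Finset ι) then none else some (x.2 ⟨p, mem_compl.mpr hp⟩)
  have decode_encode : ∀ F, decode (encode F) = F.1 := by
    rintro ⟨F, -⟩
    funext p
    cases hFp : F p <;> simp [decode, encode, hFp]
  have encode_injective : Function.Injective encode := fun F G h =>
    Subtype.ext <| by rw [← decode_encode F, ← decode_encode G, h]
  calc Nat.card {F : ι → Option Bool // #{p | F p = none} = j}
      ≤ Nat.card (Σ T : powersetCard j (univ : Finset ι), (↥((T : Finset ι)ᶜ) → Bool)) :=
        Nat.card_le_card_of_injective encode encode_injective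
    _ = (Fintype.card ι).choose j * 2 ^ (Fintype.card ι - j) := by
        rw [Nat.card_eq_fintype_card, Fintype.card_sigma]
        have fiber : ∀ T : powersetCard j (univ : Finset ι),
            Fintype.card (↥((T : Finset ι)ᶜ) → Bool) = 2 ^ (Fintype.card ι - j) := by
          rintro ⟨T, hT⟩
          rw [Fintype.card_fun, Fintype.card_bool, Fintype.card_coe, card_compl,
            (mem_powersetCard_univ.mp hT)]
        rw [sum_congr rfl fun T _ => fiber T, sum_const, card_univ, Fintype.card_coe,
          card_powersetCard, card_univ, smul_eq_mul]

theorem monotone_choose_mul_two_pow_sub (j : ℕ) :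
    Monotone fun a : ℕ => a.choose j * 2 ^ (a - j) := fun _ _ h =>
  Nat.mul_le_mul (Nat.choose_le_choose j h)
    (Nat.pow_le_pow_right two_pos (Nat.sub_le_sub_right h j))

section Faces

variable {n : ℕ}

def freeCoords (F : Fin n → Option Bool) : Finset (Fin n) := {p | F p = none}

theorem faceDim_eq_card_freeCoords (F : Fin n → Option Bool) :
    faceDim F = #(freeCoords F) := rfl

theorem mem_freeCoords {F : Fin n → Option Bool} {p : Fin n} :
    p ∈ freeCoords F ↔ F p = none := by
  simp [freeCoords]

theorem freeCoords_subset_of_faceContained {S D : Fin n → Option Bool}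
    (hSD : faceContained S D) : freeCoords S ⊆ freeCoords D := by
  intro p hp
  rw [mem_freeCoords] at hp ⊢
  cases hDp : D p with
  | none => rfl
  | some b => simp [hSD p b hDp] at hp

theorem eq_of_faceContained_of_eqOn {S S' D E : Fin n → Option Bool}
    (hSD : faceContained S D) (hSE : faceContained S E)
    (hS'D : faceContained S' D) (hS'E : faceContained S' E)
    (heq : ∀ p ∈ freeCoords D ∩ freeCoords E, S p = S' p) : S = S' := by
  funext p
  by_cases hp : p ∈ freeCoords D ∩ freeCoords E
  · exact heq p hp
  rw [mem_inter, mem_freeCoords, mem_freeCoords, not_and] at hp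
  by_cases hDp : D p = none
  · obtain ⟨b, hb⟩ := Option.ne_none_iff_exists'.mp (hp hDp)
    rw [hSE p b hb, hS'E p b hb]
  · obtain ⟨b, hb⟩ := Option.ne_none_iff_exists'.mp hDp
    rw [hSD p b hb, hS'D p b hb]

theorem freeCoords_subset_inter_of_faceContained {S D E : Fin n → Option Bool}
    (hSD : faceContained S D) (hSE : faceContained S E) :
    freeCoords S ⊆ freeCoords D ∩ freeCoords E :=
  subset_inter (freeCoords_subset_of_faceContained hSD) (freeCoords_subset_of_faceContained hSE)

theorem card_filter_restrict_eq_faceDim {S : Fin n → Option Bool} {A : Finset (Fin n)}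
    (hS : freeCoords S ⊆ A) : #{q : A | S q = none} = faceDim S := by
  rw [faceDim, ← Fintype.card_subtype, ← Fintype.card_subtype]
  exact Fintype.card_congr <|
    Equiv.subtypeSubtypeEquivSubtype fun hp => hS (mem_freeCoords.mpr hp)

theorem card_commonFaces_le (j : ℕ) (D E : Fin n → Option Bool) :
    Nat.card
        {S : Fin n → Option Bool // faceDim S = j ∧ faceContained S D ∧ faceContained S E}
      ≤ (#(freeCoords D ∩ freeCoords E)).choose j
        * 2 ^ (#(freeCoords D ∩ freeCoords E) - j) := by
  set A := freeCoords D ∩ freeCoords E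
  let restrict : {S : Fin n → Option Bool //
      faceDim S = j ∧ faceContained S D ∧ faceContained S E} →
      {F : A → Option Bool // #{q | F q = none} = j} :=
    fun ⟨S, hS, hSD, hSE⟩ => ⟨fun q => S q, (card_filter_restrict_eq_faceDim
      (freeCoords_subset_inter_of_faceContained hSD hSE)).trans hS⟩
  have restrict_injective : Function.Injective restrict := by
    rintro ⟨S, _, hSD, hSE⟩ ⟨S', _, hS'D, hS'E⟩ hrestrict
    exact Subtype.ext <| eq_of_faceContained_of_eqOn hSD hSE hS'D hS'E fun p hp =>
      congrFun (congrArg Subtype.val hrestrict) ⟨p, hp⟩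
  calc _ ≤ _ := Nat.card_le_card_of_injective restrict restrict_injective
    _ ≤ _ := card_cubeFaces_le A j
    _ = _ := by rw [Fintype.card_coe]

theorem isEmpty_commonFaces_of_fixed_ne {D E : Fin n → Option Bool} {p : Fin n}
    {b c : Bool} (hDp : D p = some c) (hEp : E p = some b) (hbc : c ≠ b) (j : ℕ) :
    IsEmpty
      {S : Fin n → Option Bool // faceDim S = j ∧ faceContained S D ∧ faceContained S E} :=
  ⟨fun ⟨_, _, hSD, hSE⟩ =>
    hbc (Option.some_inj.mp ((hSD p c hDp).symm.trans (hSE p b hEp)))⟩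

end Faces

theorem stmt_0_general (n k : ℕ)
    (D E : Fin n → Option Bool) (hD : faceDim D = k) :
    faceContained D E ∨
      Nat.card {S : Fin n → Option Bool //
          faceDim S = 2 ∧ faceContained S D ∧ faceContained S E}
        ≤ (k - 1).choose 2 * 2 ^ (k - 3) := by
  by_cases hDE : faceContained D E
  · exact Or.inl hDE
  right
  obtain ⟨p, b, hEp, hDp⟩ : ∃ p b, E p = some b ∧ D p ≠ some b := by
    simpa only [faceContained, not_forall, exists_prop] using hDE
  cases hDp' : D p with
  | none =>
    have common_subset : freeCoords D ∩ freeCoords E ⊆ (freeCoords D).erase p := fun q hq =>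
      mem_erase.mpr ⟨fun hqp => by simp [hqp, mem_freeCoords, hEp] at hq, (mem_inter.mp hq).1⟩
    have card_common : #(freeCoords D ∩ freeCoords E) ≤ k - 1 := by
      simpa [card_erase_of_mem (mem_freeCoords.mpr hDp'), ← faceDim_eq_card_freeCoords, hD]
        using card_le_card common_subset
    calc _ ≤ _ := card_commonFaces_le 2 D E
      _ ≤ (k - 1).choose 2 * 2 ^ (k - 1 - 2) := monotone_choose_mul_two_pow_sub 2 card_common
      _ = _ := by rw [Nat.sub_sub]
  | some c =>
    have := isEmpty_commonFaces_of_fixed_ne hDp' hEp (by rintro rfl; exact hDp hDp') 2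
    simp [Nat.card_of_isEmpty]

/-- For `3 ≤ k ≤ m`, a `k`-face of the `n`-cube either is contained in a given
`m`-face or shares at most `C(k-1,2)·2^(k-3)` squares (2-faces) with it. -/
theorem stmt_0 (n k m : ℕ) (hk : 3 ≤ k) (hkm : k ≤ m)
    (D E : Fin n → Option Bool) (hD : faceDim D = k) (hE : faceDim E = m) :
    faceContained D E ∨
      Nat.card {S : Fin n → Option Bool //
          faceDim S = 2 ∧ faceContained S D ∧ faceContained S E}
        ≤ (k - 1).choose 2 * 2 ^ (k - 3) :=
  stmt_0_general n k D E hD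
end

section
/- Every minor of a gaussoid is a gaussoid: if G ⊆ A_n satisfies the gaussoid axioms and (L|M) is a face of the n-cube, then the (L|M)-minor π_{(L|M)}(G ∩ (L|M)) satisfies the gaussoid axioms on the L-cube. -/
abbrev Sq (n : ℕ) := Finset (Fin n) × Finset (Fin n)

/-- `G` is a gaussoid on the cube with axis set `V ⊆ [n]`: it consists of
squares `(ij|K)` with `ijK ⊆ V` and satisfies the gaussoid axioms (G1)-(G4)
for all distinct `i,j,k ∈ V` and `L ⊆ V \ {i,j,k}`. -/
def IsGaussoidOn {n : ℕ} (V : Finset (Fin n)) (G : Set (Sq n)) : Prop :=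
  (∀ x ∈ G, x.1.card = 2 ∧ Disjoint x.1 x.2 ∧ x.1 ∪ x.2 ⊆ V) ∧
  ∀ i j k : Fin n, ∀ L : Finset (Fin n),
    i ∈ V → j ∈ V → k ∈ V → L ⊆ V →
    i ≠ j → i ≠ k → j ≠ k → i ∉ L → j ∉ L → k ∉ L →
    ((({i,j}, L) ∈ G ∧ ({i,k}, insert j L) ∈ G →
        ({i,k}, L) ∈ G ∧ ({i,j}, insert k L) ∈ G) ∧
     (({i,j}, insert k L) ∈ G ∧ ({i,k}, insert j L) ∈ G →
        ({i,j}, L) ∈ G ∧ ({i,k}, L) ∈ G) ∧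
     (({i,j}, L) ∈ G ∧ ({i,k}, L) ∈ G →
        ({i,j}, insert k L) ∈ G ∧ ({i,k}, insert j L) ∈ G) ∧
     (({i,j}, L) ∈ G ∧ ({i,j}, insert k L) ∈ G →
        ({i,k}, L) ∈ G ∨ ({j,k}, L) ∈ G))

/-- The `(L|M)`-minor of a set of squares `G`:
`π_{(L|M)}(G ∩ (L|M)) = {(ij|K) : ijK ⊆ L, (ij|K∪M) ∈ G}`. -/
def minor {n : ℕ} (G : Set (Sq n)) (L M : Finset (Fin n)) : Set (Sq n) :=
  {x | x.1 ∪ x.2 ⊆ L ∧ (x.1, x.2 ∪ M) ∈ G}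

theorem Finset.pair_subset {α : Type*} [DecidableEq α] {s : Finset α} {a b : α}
    (ha : a ∈ s) (hb : b ∈ s) : ({a, b} : Finset α) ⊆ s :=
  Finset.insert_subset ha (Finset.singleton_subset_iff.mpr hb)

section Minor

variable {n : ℕ}

theorem mem_minor_iff_of_subset {G : Set (Sq n)} {L M s K : Finset (Fin n)}
    (hs : s ⊆ L) (hK : K ⊆ L) : (s, K) ∈ minor G L M ↔ (s, K ∪ M) ∈ G :=
  and_iff_right (Finset.union_subset hs hK)

/-- On the squares of the face `(L|M)` the minor is the restriction of `G` along `K ↦ K ∪ M`,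
and `insert j K ∪ M = insert j (K ∪ M)`, so each axiom for the minor at `K` is the same axiom
for `G` at `K ∪ M`. -/
theorem IsGaussoidOn.minor {V L M : Finset (Fin n)} {G : Set (Sq n)} (hG : IsGaussoidOn V G)
    (hLM : Disjoint L M) (hLV : L ⊆ V) (hMV : M ⊆ V) : IsGaussoidOn L (minor G L M) := by
  obtain ⟨hsupp, hax⟩ := hG
  refine ⟨fun x ⟨hxL, hx⟩ => ?_, fun i j k K hi hj hk hKL hij hik hjk hiK hjK hkK => ?_⟩
  · obtain ⟨hcard, hdisj, -⟩ := hsupp _ hx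
    exact ⟨hcard, (Finset.disjoint_union_right.mp hdisj).1, hxL⟩
  · have notMem_union_M {a : Fin n} (ha : a ∈ L) (haK : a ∉ K) : a ∉ K ∪ M :=
      Finset.notMem_union.mpr ⟨haK, Finset.disjoint_left.mp hLM ha⟩
    simp only [mem_minor_iff_of_subset (Finset.pair_subset hi hj) hKL,
      mem_minor_iff_of_subset (Finset.pair_subset hi hk) hKL,
      mem_minor_iff_of_subset (Finset.pair_subset hj hk) hKL,
      mem_minor_iff_of_subset (Finset.pair_subset hi hj) (Finset.insert_subset hk hKL),
      mem_minor_iff_of_subset (Finset.pair_subset hi hk) (Finset.insert_subset hj hKL),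
      Finset.insert_union]
    exact hax i j k (K ∪ M) (hLV hi) (hLV hj) (hLV hk) (Finset.union_subset (hKL.trans hLV) hMV)
      hij hik hjk (notMem_union_M hi hiK) (notMem_union_M hj hjK) (notMem_union_M hk hkK)

end Minor

/-- Every minor of a gaussoid is a gaussoid: if `G` satisfies the gaussoid
axioms on the whole `n`-cube and `(L|M)` is a face, then the `(L|M)`-minor
satisfies the gaussoid axioms on the `L`-cube. -/
theorem stmt_3 (n : ℕ) (G : Set (Sq n)) (L M : Finset (Fin n))
    (hLM : Disjoint L M) (hG : IsGaussoidOn Finset.univ G) :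
    IsGaussoidOn L (minor G L M) :=
  hG.minor hLM (Finset.subset_univ L) (Finset.subset_univ M)
end

section
/- The graph Q(n,k,p,q) is a complete graph if and only if n + q ≤ p + k. -/
/-- The set of star positions of a face. -/
def stars {n : ℕ} (F : Fin n → Option Bool) : Finset (Fin n) :=
  Finset.univ.filter (fun p => F p = none)

/-- Two faces are compatible (have nonempty intersection in the face lattice)
iff they agree on every coordinate which is fixed in both. -/
def compatible {n : ℕ} (D S : Fin n → Option Bool) : Prop :=
  ∀ p b b', D p = some b → S p = some b' → b = b'

/-- `dim (D ∩ S) ≥ q` in the face lattice of the `n`-cube (for `q : ℕ`). -/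
def meets {n : ℕ} (q : ℕ) (D S : Fin n → Option Bool) : Prop :=
  compatible D S ∧ q ≤ (stars D ∩ stars S).card

/-- The graph `Q(n,k,p,q)`: vertices are the `k`-faces of the `n`-cube, and two
distinct `k`-faces `D`, `F` are adjacent iff there is a `p`-face `S` with
`dim (D ∩ S) ≥ q` and `dim (F ∩ S) ≥ q`. -/
def Q (n k p q : ℕ) : SimpleGraph {D : Fin n → Option Bool // faceDim D = k} where
  Adj D F := D ≠ F ∧
    ∃ S : Fin n → Option Bool, faceDim S = p ∧ meets q D.1 S ∧ meets q F.1 S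
  symm := by
    constructor
    rintro D F ⟨h, S, hS, h1, h2⟩
    exact ⟨Ne.symm h, S, hS, h2, h1⟩
  loopless := by constructor; rintro D ⟨h, -⟩; exact h rfl

def cubeFace {n : ℕ} (s : Finset (Fin n)) (v : Fin n → Bool) : Fin n → Option Bool :=
  fun i => if i ∈ s then none else some (v i)

section

variable {n : ℕ}

lemma stars_cubeFace (s : Finset (Fin n)) (v : Fin n → Bool) : stars (cubeFace s v) = s := by
  ext i
  by_cases hi : i ∈ s <;> simp [stars, cubeFace, hi]

lemma faceDim_cubeFace (s : Finset (Fin n)) (v : Fin n → Bool) :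
    faceDim (cubeFace s v) = s.card :=
  congrArg Finset.card (stars_cubeFace s v)

lemma faceDim_eq_card_stars (F : Fin n → Option Bool) : faceDim F = (stars F).card := rfl

lemma faceDim_le (F : Fin n → Option Bool) : faceDim F ≤ n :=
  (Finset.card_filter_le _ _).trans_eq (Finset.card_fin n)

lemma compatible_cubeFace {D : Fin n → Option Bool} {s : Finset (Fin n)} {v : Fin n → Bool}
    (h : ∀ i ∉ s, ∀ b, D i = some b → v i = b) : compatible D (cubeFace s v) := by
  intro i b b' hb hb'
  by_cases hi : i ∈ s
  · simp [cubeFace, hi] at hb'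
  · simp only [cubeFace, hi, if_false, Option.some.injEq] at hb'
    exact hb' ▸ (h i hi b hb).symm

lemma compl_subset_stars_of_compatible {s : Finset (Fin n)} {v w : Fin n → Bool}
    {S : Fin n → Option Bool} (hvw : ∀ i, v i ≠ w i) (hv : compatible (cubeFace s v) S)
    (hw : compatible (cubeFace s w) S) : sᶜ ⊆ stars S := by
  intro i hi
  rw [Finset.mem_compl] at hi
  simp only [stars, Finset.mem_filter, Finset.mem_univ, true_and]
  cases hS : S i with
  | none => rfl
  | some b =>
    have hvb := hv i (v i) b (by simp [cubeFace, hi]) hS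
    have hwb := hw i (w i) b (by simp [cubeFace, hi]) hS
    exact absurd (hvb.trans hwb.symm) (hvw i)

lemma add_card_compl_le_faceDim {q : ℕ} {s : Finset (Fin n)} {v w : Fin n → Bool}
    {S : Fin n → Option Bool} (hvw : ∀ i, v i ≠ w i) (hv : meets q (cubeFace s v) S)
    (hw : compatible (cubeFace s w) S) : q + sᶜ.card ≤ faceDim S := by
  have hsub := compl_subset_stars_of_compatible hvw hv.1 hw
  have hdisj : Disjoint (s ∩ stars S) sᶜ :=
    disjoint_compl_right.mono_left Finset.inter_subset_left
  have hq : q ≤ (s ∩ stars S).card := by simpa only [stars_cubeFace] using hv.2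
  calc q + sᶜ.card ≤ (s ∩ stars S).card + sᶜ.card := by omega
    _ = ((s ∩ stars S) ∪ sᶜ).card := (Finset.card_union_of_disjoint hdisj).symm
    _ ≤ (stars S).card :=
      Finset.card_le_card (Finset.union_subset Finset.inter_subset_right hsub)

lemma exists_face_meets_of_add_le {D F : Fin n → Option Bool} {k p q : ℕ}
    (hD : faceDim D = k) (hF : faceDim F = k) (hpk : p ≤ k) (h : n + q ≤ p + k) :
    ∃ S, faceDim S = p ∧ meets q D S ∧ meets q F S := by
  have hkn : k ≤ n := hD ▸ faceDim_le D
  obtain ⟨C, hCD, hC⟩ := Finset.exists_subset_card_eq (s := stars D) (n := n - p)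
    (by rw [← faceDim_eq_card_stars]; omega)
  have hfree : ∀ E : Fin n → Option Bool, faceDim E = k → q ≤ (stars E ∩ Cᶜ).card := by
    intro E hE
    have := Finset.le_card_sdiff C (stars E)
    rw [faceDim_eq_card_stars] at hE
    rw [← Finset.sdiff_eq_inter_compl]
    omega
  refine ⟨cubeFace Cᶜ fun i => (F i).getD false, ?_, ⟨?_, ?_⟩, ⟨?_, ?_⟩⟩
  · rw [faceDim_cubeFace, Finset.card_compl, Fintype.card_fin]
    omega
  · refine compatible_cubeFace fun i hi b hb => ?_
    have : D i = none := by simpa [stars] using hCD (Finset.notMem_compl.mp hi)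
    simp [this] at hb
  · simpa only [stars_cubeFace] using hfree D hD
  · exact compatible_cubeFace fun i _ b hb => by simp [hb]
  · simpa only [stars_cubeFace] using hfree F hF

end

theorem stmt_7_general (n k p q : ℕ) (hq : q ≤ p) (hp : p ≤ k) :
    (∀ D F : {D : Fin n → Option Bool // faceDim D = k},
        D ≠ F → (Q n k p q).Adj D F) ↔ n + q ≤ p + k := by
  refine ⟨fun hcomplete => ?_, fun h D F hDF =>
    ⟨hDF, exists_face_meets_of_add_le D.2 F.2 hp h⟩⟩
  rcases le_or_gt n k with hnk | hkn
  · omega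
  let s := Finset.Iio (⟨k, hkn⟩ : Fin n)
  have hs : s.card = k := Fin.card_Iio _
  let D : {D : Fin n → Option Bool // faceDim D = k} :=
    ⟨cubeFace s fun _ => false, by rw [faceDim_cubeFace, hs]⟩
  let F : {D : Fin n → Option Bool // faceDim D = k} :=
    ⟨cubeFace s fun _ => true, by rw [faceDim_cubeFace, hs]⟩
  have hDF : D ≠ F := fun h => by
    simpa [D, F, s, cubeFace] using congrFun (congrArg Subtype.val h) ⟨k, hkn⟩
  obtain ⟨-, S, hSp, hDS, hFS⟩ := hcomplete D F hDF
  have := add_card_compl_le_faceDim (fun _ => Bool.false_ne_true) hDS hFS.1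
  rw [Finset.card_compl, Fintype.card_fin, hs] at this
  omega

/-- `Q(n,k,p,q)` (for `n ≥ k ≥ p ≥ q`) is a complete graph iff `n + q ≤ p + k`. -/
theorem stmt_7 (n k p q : ℕ) (hq : q ≤ p) (hp : p ≤ k) (hk : k ≤ n) :
    (∀ D F : {D : Fin n → Option Bool // faceDim D = k},
        D ≠ F → (Q n k p q).Adj D F) ↔ n + q ≤ p + k :=
  stmt_7_general n k p q hq hp
end

section
/- For n ≥ 5, the graph Q(n,3,3,2) is regular of degree 12(n-3)(n-4) + 7(n-3), and it is complete for n ≤ 4. -/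
/-!
Write `A`, `B` for the free coordinates of two `3`-faces `D`, `F`, `t = #(A ∩ B)`, and `d` for the
number of coordinates fixed in both with different values. A `3`-face `S` sharing a square with
both must be free on these `d` clashing coordinates, which lie outside `A ∪ B`, and its three free
coordinates include two of `A` and two of `B`; conversely such a choice of three coordinates
spans a suitable `S`. So `D`, `F` are adjacent iff `d ≤ 1`, `d < t` and `D ≠ F`, i.e. iff
`(t, d)` is one of `(3, 1)`, `(2, 0)`, `(2, 1)`, `(1, 0)`.

Relative to a fixed `D`, the `3`-faces with profile `(t, d)` number
`C(3, t) C(n - 3, 3 - t) 2 ^ (3 - t) C(n - 6 + t, d)`: choose the free coordinates inside and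
outside `A`, the values on the `3 - t` coordinates of `A` that become fixed, and the clashing
coordinates among the remaining `n - 6 + t`. The four profiles contribute
`(n - 3) + 6 (n - 3) + 6 (n - 3) (n - 4) + 12 C(n - 3, 2)`. For `n ≤ 4`, `#(A ∪ B) ≤ 4` forces
`t ≥ 2` and `d ≤ n - #(A ∪ B) ≤ t - 2`.
-/

open Finset

theorem Finset.card_filter_powersetCard_card_inter_eq {α : Type*} [DecidableEq α]
    {s A : Finset α} (hA : A ⊆ s) {k j : ℕ} (hjk : j ≤ k) :
    #{B ∈ powersetCard k s | #(A ∩ B) = j} = (#A).choose j * (#s - #A).choose (k - j) := by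
  rw [← card_powersetCard j A, ← card_sdiff_of_subset hA, ← card_powersetCard (k - j) (s \ A),
    ← card_product]
  symm
  refine card_nbij' (fun p => p.1 ∪ p.2) (fun B => (A ∩ B, B \ A)) ?_ ?_ ?_ ?_
  · rintro ⟨X, Y⟩ h
    simp only [coe_product, Set.mem_prod, mem_coe, mem_powersetCard, subset_sdiff] at h
    obtain ⟨⟨hXA, hX⟩, ⟨hYs, hYA⟩, hY⟩ := h
    have hAXY : A ∩ (X ∪ Y) = X := by
      rw [inter_union_distrib_left, inter_eq_right.mpr hXA,
        disjoint_iff_inter_eq_empty.mp hYA.symm, union_empty]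
    simp only [mem_coe, mem_filter, mem_powersetCard, hAXY, hX, and_true]
    refine ⟨union_subset (hXA.trans hA) hYs, ?_⟩
    rw [card_union_of_disjoint (disjoint_of_subset_left hXA hYA.symm), hX, hY]
    omega
  · intro B hB
    simp only [mem_coe, mem_filter, mem_powersetCard] at hB
    obtain ⟨⟨hBs, hB⟩, hAB⟩ := hB
    simp only [coe_product, Set.mem_prod, mem_coe, mem_powersetCard]
    refine ⟨⟨inter_subset_left, hAB⟩, sdiff_subset_sdiff hBs subset_rfl, ?_⟩
    rw [card_sdiff, hB, hAB]
  · rintro ⟨X, Y⟩ h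
    simp only [coe_product, Set.mem_prod, mem_coe, mem_powersetCard, subset_sdiff] at h
    obtain ⟨⟨hXA, -⟩, ⟨-, hYA⟩, -⟩ := h
    have hYA' : ∀ x ∈ Y, x ∉ A := fun x hx => disjoint_left.mp hYA hx
    refine Prod.ext ?_ ?_ <;> ext x <;> simp only [mem_inter, mem_union, mem_sdiff] <;> grind
  · intro B _
    simp only [inter_comm A B, union_comm (B ∩ A), sdiff_union_inter]

namespace CubeFace

variable {n : ℕ} {D F S : Fin n → Option Bool}

lemma mem_stars {p : Fin n} : p ∈ stars D ↔ D p = none := by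
  simp [stars]

lemma faceDim_eq_card_stars (D : Fin n → Option Bool) : faceDim D = #(stars D) := rfl

def conflicts (D F : Fin n → Option Bool) : Finset (Fin n) :=
  {p | D p ≠ none ∧ F p ≠ none ∧ D p ≠ F p}

lemma mem_conflicts {p : Fin n} :
    p ∈ conflicts D F ↔ D p ≠ none ∧ F p ≠ none ∧ D p ≠ F p := by
  simp [conflicts]

lemma conflicts_self (D : Fin n → Option Bool) : conflicts D D = ∅ := by
  ext p; simp [mem_conflicts]

lemma disjoint_conflicts_stars_union :
    Disjoint (conflicts D F) (stars D ∪ stars F) := by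
  simp only [disjoint_left, mem_conflicts, mem_union, mem_stars]
  tauto

lemma card_conflicts_add_card_stars_union_le :
    #(conflicts D F) + #(stars D ∪ stars F) ≤ n := by
  rw [← card_union_of_disjoint disjoint_conflicts_stars_union]
  simpa using card_le_univ (conflicts D F ∪ (stars D ∪ stars F))

lemma eq_of_stars_eq_of_conflicts_eq_empty (hs : stars D = stars F)
    (hc : conflicts D F = ∅) : D = F := by
  funext p
  have hp : D p = none ↔ F p = none := by rw [← mem_stars, hs, mem_stars]
  have : p ∉ conflicts D F := hc ▸ notMem_empty p
  rw [mem_conflicts] at this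
  by_cases hDp : D p = none
  · rw [hDp, hp.mp hDp]
  · push Not at this
    exact this hDp fun hFp => hDp (hp.mpr hFp)

lemma conflicts_subset_stars (hD : compatible D S) (hF : compatible F S) :
    conflicts D F ⊆ stars S := by
  intro p hp
  rw [mem_conflicts] at hp
  rw [mem_stars]
  obtain ⟨b, hb⟩ := Option.ne_none_iff_exists'.mp hp.1
  obtain ⟨c, hc⟩ := Option.ne_none_iff_exists'.mp hp.2.1
  by_contra hS
  obtain ⟨e, he⟩ := Option.ne_none_iff_exists'.mp hS
  exact hp.2.2 (by rw [hb, hc, hD p b e hb he, hF p c e hc he])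

lemma card_conflicts_le_one_and_lt_of_meets (hS : faceDim S = 3) (hD : meets 2 D S)
    (hF : meets 2 F S) :
    #(conflicts D F) ≤ 1 ∧ #(conflicts D F) < #(stars D ∩ stars F) := by
  obtain ⟨hcD, hD2⟩ := hD
  obtain ⟨hcF, hF2⟩ := hF
  rw [faceDim_eq_card_stars] at hS
  set A := stars D; set B := stars F; set C := stars S
  have hW : conflicts D F ⊆ C \ (A ∪ B) :=
    subset_sdiff.mpr ⟨conflicts_subset_stars hcD hcF, disjoint_conflicts_stars_union⟩
  have hWA : conflicts D F ⊆ C \ A := hW.trans (sdiff_subset_sdiff subset_rfl subset_union_left)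
  have hsplit : #(C \ (A ∪ B)) + #((A ∩ C) ∪ (B ∩ C)) = #C := by
    rw [← union_inter_distrib_right, inter_comm]; exact card_sdiff_add_card_inter C (A ∪ B)
  have hAB := card_union_add_card_inter (A ∩ C) (B ∩ C)
  have hABC : #((A ∩ C) ∩ (B ∩ C)) ≤ #(A ∩ B) :=
    card_le_card fun p hp => by simp only [mem_inter] at hp ⊢; exact ⟨hp.1.1, hp.2.1⟩
  have hCA : #(C \ A) + #(A ∩ C) = #C := by rw [inter_comm]; exact card_sdiff_add_card_inter C A
  have h1 := card_le_card hW
  have h2 := card_le_card hWA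
  omega

lemma exists_stars_eq_meets_meets {q : ℕ} {C : Finset (Fin n)} (hD : q ≤ #(stars D ∩ C))
    (hF : q ≤ #(stars F ∩ C)) (hC : conflicts D F ⊆ C) :
    ∃ S, stars S = C ∧ meets q D S ∧ meets q F S := by
  set S : Fin n → Option Bool := fun p =>
    if p ∈ C then none else some ((D p).getD ((F p).getD false))
  have hS : stars S = C := by ext p; by_cases hp : p ∈ C <;> simp [mem_stars, S, hp]
  have hSp {p : Fin n} {c : Bool} (h : S p = some c) :
      p ∉ C ∧ (D p).getD ((F p).getD false) = c := by
    by_cases hp : p ∈ C <;> simp_all [S]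
  refine ⟨S, hS, ⟨?_, hS ▸ hD⟩, ⟨?_, hS ▸ hF⟩⟩
  · intro p b c hb hc
    simpa [hb] using (hSp hc).2
  · intro p b c hb hc
    obtain ⟨hpC, hpc⟩ := hSp hc
    have : p ∉ conflicts D F := fun h => hpC (hC h)
    rw [mem_conflicts] at this
    cases hDp : D p with
    | none => simpa [hDp, hb] using hpc
    | some e => simp_all

lemma exists_free_coordinates_of_card_conflicts (hD : #(stars D) = 3) (hF : #(stars F) = 3)
    (h1 : #(conflicts D F) ≤ 1) (hlt : #(conflicts D F) < #(stars D ∩ stars F)) :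
    ∃ C : Finset (Fin n), #C ≤ 3 ∧ 2 ≤ #(stars D ∩ C) ∧ 2 ≤ #(stars F ∩ C) ∧
      conflicts D F ⊆ C := by
  by_cases ht : 2 ≤ #(stars D ∩ stars F)
  · obtain ⟨I, hI, hI2⟩ := exists_subset_card_eq ht
    refine ⟨I ∪ conflicts D F, (card_union_le _ _).trans (by omega), ?_, ?_,
      subset_union_right⟩
    · exact hI2 ▸ card_le_card (subset_inter (hI.trans inter_subset_left) subset_union_left)
    · exact hI2 ▸ card_le_card (subset_inter (hI.trans inter_subset_right) subset_union_left)
  · obtain ⟨x, hx⟩ := card_eq_one.mp (show #(stars D ∩ stars F) = 1 by omega)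
    have hxD : x ∈ stars D := (mem_inter.mp (hx ▸ mem_singleton_self x)).1
    have hxF : x ∈ stars F := (mem_inter.mp (hx ▸ mem_singleton_self x)).2
    obtain ⟨I, hxI, hI, hI2⟩ :=
      exists_subsuperset_card_eq (singleton_subset_iff.mpr hxD) (by simp) (by omega : 2 ≤ _)
    obtain ⟨J, hxJ, hJ, hJ2⟩ :=
      exists_subsuperset_card_eq (singleton_subset_iff.mpr hxF) (by simp) (by omega : 2 ≤ _)
    have hIJ : 1 ≤ #(I ∩ J) :=
      card_pos.mpr ⟨x, mem_inter.mpr ⟨hxI (mem_singleton_self x),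
        hxJ (mem_singleton_self x)⟩⟩
    refine ⟨I ∪ J, by have := card_union_add_card_inter I J; omega, ?_, ?_, ?_⟩
    · exact hI2 ▸ card_le_card (subset_inter hI subset_union_left)
    · exact hJ2 ▸ card_le_card (subset_inter hJ subset_union_right)
    · simp [card_eq_zero.mp (show #(conflicts D F) = 0 by omega)]

lemma exists_face_meets_of_card_conflicts (hD : #(stars D) = 3) (hF : #(stars F) = 3)
    (h1 : #(conflicts D F) ≤ 1) (hlt : #(conflicts D F) < #(stars D ∩ stars F)) :
    ∃ S, faceDim S = 3 ∧ meets 2 D S ∧ meets 2 F S := by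
  obtain ⟨C, hC3, hDC, hFC, hWC⟩ := exists_free_coordinates_of_card_conflicts hD hF h1 hlt
  have hn : 3 ≤ #(univ : Finset (Fin n)) := hD ▸ card_le_univ _
  obtain ⟨C', hCC', -, hC'⟩ := exists_subsuperset_card_eq (subset_univ C) hC3 hn
  obtain ⟨S, hS, hDS, hFS⟩ := exists_stars_eq_meets_meets (C := C')
    (hDC.trans (card_le_card (inter_subset_inter_left hCC')))
    (hFC.trans (card_le_card (inter_subset_inter_left hCC'))) (hWC.trans hCC')
  exact ⟨S, by rw [faceDim_eq_card_stars, hS, hC'], hDS, hFS⟩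

theorem exists_face_meets_iff (hD : faceDim D = 3) (hF : faceDim F = 3) :
    (∃ S, faceDim S = 3 ∧ meets 2 D S ∧ meets 2 F S) ↔
      #(conflicts D F) ≤ 1 ∧ #(conflicts D F) < #(stars D ∩ stars F) :=
  ⟨fun ⟨_, hS, hDS, hFS⟩ => card_conflicts_le_one_and_lt_of_meets hS hDS hFS,
    fun h => exists_face_meets_of_card_conflicts hD hF h.1 h.2⟩

/-- The faces that are free exactly on `B` and clash with `D` exactly on `W`, provided `W` avoids
`stars D ∪ B` (see `mem_cell`): only the coordinates in `stars D \ B` leave a choice. -/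
def cell (D : Fin n → Option Bool) (B W : Finset (Fin n)) : Finset (Fin n → Option Bool) :=
  Fintype.piFinset fun p =>
    if p ∈ B then {none}
    else if p ∈ stars D then {some false, some true}
    else if p ∈ W then {(D p).map not}
    else {D p}

lemma card_cell (D : Fin n → Option Bool) (B W : Finset (Fin n)) :
    #(cell D B W) = 2 ^ #(stars D \ B) := by
  rw [cell, Fintype.card_piFinset, ← prod_const, ← univ_inter (stars D \ B), ← prod_ite_mem]
  refine prod_congr rfl fun p _ => ?_
  by_cases hB : p ∈ B <;> by_cases hD : p ∈ stars D <;> by_cases hW : p ∈ W <;>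
    simp [hB, hD, hW]

lemma mem_cell {B W : Finset (Fin n)} (hW : Disjoint W (stars D ∪ B)) :
    F ∈ cell D B W ↔ stars F = B ∧ conflicts D F = W := by
  simp only [cell, Fintype.mem_piFinset, Finset.ext_iff, ← forall_and, mem_stars, mem_conflicts]
  refine forall_congr' fun p => ?_
  have hWp : p ∈ W → D p ≠ none ∧ p ∉ B := fun h => by
    have := disjoint_left.mp hW h; simp_all [mem_stars]
  cases hD : D p with
  | none => by_cases hB : p ∈ B <;> cases F p <;> simp_all
  | some b =>
    by_cases hB : p ∈ B <;> by_cases hpW : p ∈ W <;> rcases F p with _ | ⟨_ | _⟩ <;>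
      cases b <;> simp_all

lemma card_filter_stars_eq_card_conflicts_eq (D : Fin n → Option Bool) (B : Finset (Fin n))
    (d : ℕ) : #{F | stars F = B ∧ #(conflicts D F) = d} =
      2 ^ #(stars D \ B) * (#(stars D ∪ B)ᶜ).choose d := by
  rw [card_eq_sum_card_fiberwise (f := conflicts D) (t := powersetCard d (stars D ∪ B)ᶜ)
    fun F hF => by
      obtain ⟨-, hB, hd⟩ := mem_filter.mp hF
      rw [mem_coe, mem_powersetCard, subset_compl_iff_disjoint_right, ← hB]
      exact ⟨disjoint_conflicts_stars_union, hd⟩,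
    ← card_powersetCard, mul_comm, ← smul_eq_mul, ← sum_const]
  refine sum_congr rfl fun W hW => ?_
  rw [mem_powersetCard, subset_compl_iff_disjoint_right] at hW
  rw [← card_cell D B W]
  congr 1
  ext F
  simp only [mem_filter, mem_univ, true_and, mem_cell hW.1]
  constructor
  · exact fun h => ⟨h.1.1, h.2⟩
  · rintro ⟨hB, hC⟩
    exact ⟨⟨hB, hC ▸ hW.2⟩, hC⟩

theorem card_filter_faces_eq (D : Fin n → Option Bool) {k t : ℕ} (htk : t ≤ k) (d : ℕ) :
    #{F | #(stars F) = k ∧ #(stars D ∩ stars F) = t ∧ #(conflicts D F) = d} =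
      (#(stars D)).choose t * (n - #(stars D)).choose (k - t) *
        (2 ^ (#(stars D) - t) * (n - (#(stars D) + k - t)).choose d) := by
  set A := stars D
  have hcount := card_filter_powersetCard_card_inter_eq (subset_univ A) htk
  rw [card_univ, Fintype.card_fin] at hcount
  rw [card_eq_sum_card_fiberwise (f := stars) (t := {B ∈ powersetCard k univ | #(A ∩ B) = t})
    fun F hF => by obtain ⟨-, hk, ht, -⟩ := mem_filter.mp hF; simp [hk, ht],
    ← hcount, ← smul_eq_mul, ← sum_const]
  refine sum_congr rfl fun B hB => ?_
  obtain ⟨hBk, hBt⟩ : #B = k ∧ #(A ∩ B) = t := by simpa using hB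
  have hAB : #(A ∪ B) = #A + k - t := by have := card_union_add_card_inter A B; omega
  have hcompl : #(A ∪ B)ᶜ = n - #(A ∪ B) := by rw [card_compl, Fintype.card_fin]
  calc _ = #({F | stars F = B ∧ #(conflicts D F) = d} : Finset (Fin n → Option Bool)) := by
        congr 1
        ext F
        simp only [mem_filter, mem_univ, true_and]
        constructor
        · exact fun h => ⟨h.2, h.1.2.2⟩
        · rintro ⟨rfl, hd⟩
          exact ⟨⟨hBk, hBt, hd⟩, rfl⟩
    _ = _ := by
      rw [card_filter_stars_eq_card_conflicts_eq, card_sdiff, inter_comm B A, hBt, hcompl, hAB]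

lemma eq_iff_card_inter_stars_eq (h : #(stars D) = #(stars F)) :
    D = F ↔ #(stars D ∩ stars F) = #(stars D) ∧ #(conflicts D F) = 0 := by
  constructor
  · rintro rfl
    simp [conflicts_self]
  · rintro ⟨ht, hd⟩
    have hDF : stars D ⊆ stars F :=
      inter_eq_left.mp (eq_of_subset_of_card_le inter_subset_left ht.ge)
    exact eq_of_stars_eq_of_conflicts_eq_empty (eq_of_subset_of_card_le hDF h.ge)
      (card_eq_zero.mp hd)

def profile (D F : Fin n → Option Bool) : ℕ × ℕ := (#(stars D ∩ stars F), #(conflicts D F))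

def adjProfiles : Finset (ℕ × ℕ) := {(3, 1), (2, 0), (2, 1), (1, 0)}

lemma Q_adj_iff (D F : {D : Fin n → Option Bool // faceDim D = 3}) :
    (Q n 3 3 2).Adj D F ↔ profile D.1 F.1 ∈ adjProfiles := by
  have hD : #(stars D.1) = 3 := D.2
  have hF : #(stars F.1) = 3 := F.2
  have ht : #(stars D.1 ∩ stars F.1) ≤ 3 := (card_le_card inter_subset_left).trans hD.le
  change D ≠ F ∧ _ ↔ _
  rw [Ne, Subtype.ext_iff, eq_iff_card_inter_stars_eq (hD.trans hF.symm),
    exists_face_meets_iff D.2 F.2, hD]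
  simp only [profile, adjProfiles, mem_insert, mem_singleton, Prod.mk.injEq]
  omega

lemma card_neighborSet_Q (D : {D : Fin n → Option Bool // faceDim D = 3}) :
    Nat.card ((Q n 3 3 2).neighborSet D) =
      #{F | #(stars F) = 3 ∧ profile D.1 F ∈ adjProfiles} := by
  rw [← Fintype.card_subtype, ← Nat.card_eq_fintype_card]
  refine Nat.card_congr ((Equiv.subtypeEquivRight fun F => ?_).trans
    (Equiv.subtypeSubtypeEquivSubtypeInter (fun F => faceDim F = 3) _))
  rw [SimpleGraph.mem_neighborSet, Q_adj_iff]

theorem card_neighborSet_Q_of_five_le (hn : 5 ≤ n)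
    (D : {D : Fin n → Option Bool // faceDim D = 3}) :
    Nat.card ((Q n 3 3 2).neighborSet D) = 12 * (n - 3) * (n - 4) + 7 * (n - 3) := by
  have hD : #(stars D.1) = 3 := D.2
  rw [card_neighborSet_Q, card_eq_sum_card_fiberwise (f := profile D.1) (t := adjProfiles)
    fun F hF => (mem_filter.mp hF).2.2]
  have hfiber : ∀ p ∈ adjProfiles,
      #{F ∈ ({F | #(stars F) = 3 ∧ profile D.1 F ∈ adjProfiles} : Finset _) |
        profile D.1 F = p} =
      #{F | #(stars F) = 3 ∧ #(stars D.1 ∩ stars F) = p.1 ∧ #(conflicts D.1 F) = p.2} := by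
    intro p hp
    congr 1
    ext F
    simp only [mem_filter, mem_univ, true_and]
    constructor
    · rintro ⟨⟨h3, -⟩, hF⟩
      exact ⟨h3, congrArg Prod.fst hF, congrArg Prod.snd hF⟩
    · rintro ⟨h3, h1, h2⟩
      have hF : profile D.1 F = p := Prod.ext h1 h2
      exact ⟨⟨h3, hF ▸ hp⟩, hF⟩
  rw [sum_congr rfl hfiber, adjProfiles, sum_insert (by decide), sum_insert (by decide),
    sum_insert (by decide), sum_singleton]
  simp only [card_filter_faces_eq D.1 (le_refl 3), card_filter_faces_eq D.1 (by norm_num : 2 ≤ 3),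
    card_filter_faces_eq D.1 (by norm_num : 1 ≤ 3), hD]
  obtain ⟨m, rfl⟩ := Nat.exists_eq_add_of_le' hn
  have hchoose := Nat.add_one_mul_choose_eq (m + 1) 1
  simp only [Nat.choose_one_right, Nat.reduceAdd, Nat.choose_self, Nat.reduceSubDiff, tsub_self,
    Nat.choose_zero_right, mul_one, pow_zero, one_mul, Nat.choose_succ_self_right,
    pow_one, Nat.add_one_sub_one, Nat.reducePow, add_tsub_cancel_right] at hchoose ⊢
  linarith

lemma Q_adj_of_le_four (hn : n ≤ 4) {D F : {D : Fin n → Option Bool // faceDim D = 3}}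
    (hDF : D ≠ F) : (Q n 3 3 2).Adj D F := by
  have hD : #(stars D.1) = 3 := D.2
  have hF : #(stars F.1) = 3 := F.2
  have ht : #(stars D.1 ∩ stars F.1) ≤ 3 := (card_le_card inter_subset_left).trans hD.le
  have hne :=
    (eq_iff_card_inter_stars_eq (hD.trans hF.symm)).not.mp (Subtype.ext_iff.not.mp hDF)
  have hcover := card_conflicts_add_card_stars_union_le (D := D.1) (F := F.1)
  have hunion := card_union_add_card_inter (stars D.1) (stars F.1)
  rw [Q_adj_iff]
  simp only [profile, adjProfiles, mem_insert, mem_singleton, Prod.mk.injEq]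
  omega

end CubeFace

open CubeFace in
/-- For `n ≥ 5`, the graph `Q(n,3,3,2)` is regular of degree
`12(n-3)(n-4) + 7(n-3)`; and `Q(m,3,3,2)` is complete for all `m ≤ 4`. -/
theorem stmt_12 (n : ℕ) (hn : 5 ≤ n) :
    (∀ D : {D : Fin n → Option Bool // faceDim D = 3},
      Nat.card ((Q n 3 3 2).neighborSet D) = 12 * (n - 3) * (n - 4) + 7 * (n - 3)) ∧
    (∀ m : ℕ, m ≤ 4 → ∀ D F : {D : Fin m → Option Bool // faceDim D = 3},
      D ≠ F → (Q m 3 3 2).Adj D F) :=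
  ⟨card_neighborSet_Q_of_five_le hn, fun _ hm _ _ => Q_adj_of_le_four hm⟩
end

section
/- If F is an independent set in the graph Q(n,k,3,2) (k ≥ 3), then the number of n-gaussoids is at least |G_k|^{|F|}, where |G_k| is the number of k-gaussoids. Concretely, every assignment of a k-gaussoid to each face in F lifts via embeddings to a distinct n-gaussoid. -/
/-- `G` is an `n`-gaussoid: a set of squares of the `n`-cube satisfying the
gaussoid axioms (G1)-(G4). -/
def IsGaussoid (n : ℕ) (G : Finset (Sq n)) : Prop :=
  (∀ x ∈ G, x.1.card = 2 ∧ Disjoint x.1 x.2) ∧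
  ∀ i j k : Fin n, ∀ L : Finset (Fin n),
    i ≠ j → i ≠ k → j ≠ k → i ∉ L → j ∉ L → k ∉ L →
    ((({i,j}, L) ∈ G ∧ ({i,k}, insert j L) ∈ G →
        ({i,k}, L) ∈ G ∧ ({i,j}, insert k L) ∈ G) ∧
     (({i,j}, insert k L) ∈ G ∧ ({i,k}, insert j L) ∈ G →
        ({i,j}, L) ∈ G ∧ ({i,k}, L) ∈ G) ∧
     (({i,j}, L) ∈ G ∧ ({i,k}, L) ∈ G →
        ({i,j}, insert k L) ∈ G ∧ ({i,k}, insert j L) ∈ G) ∧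
     (({i,j}, L) ∈ G ∧ ({i,j}, insert k L) ∈ G →
        ({i,k}, L) ∈ G ∨ ({j,k}, L) ∈ G))

/-- A face of the `n`-cube in set notation: a pair `(I, K)` of disjoint sets,
`I` the star coordinates and `K` the coordinates fixed to `1`.
`faceLe F G` means `F` is contained in `G`. -/
def faceLe {n : ℕ} (F G : Finset (Fin n) × Finset (Fin n)) : Prop :=
  F.1 ⊆ G.1 ∧ G.2 ⊆ F.2 ∧ F.2 ⊆ G.1 ∪ G.2

/-- Two faces of the `n`-cube share a square (a 2-face contained in both). -/
def sharesSquare {n : ℕ} (D F : Finset (Fin n) × Finset (Fin n)) : Prop :=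
  ∃ x : Finset (Fin n) × Finset (Fin n),
    x.1.card = 2 ∧ Disjoint x.1 x.2 ∧ faceLe x D ∧ faceLe x F

/-- Adjacency in `Q(n,k,3,2)`: two (`k`-)faces are adjacent iff some
`3`-face shares a square with both. -/
def adj332 {n : ℕ} (D F : Finset (Fin n) × Finset (Fin n)) : Prop :=
  D ≠ F ∧ ∃ S : Finset (Fin n) × Finset (Fin n),
    S.1.card = 3 ∧ Disjoint S.1 S.2 ∧ sharesSquare D S ∧ sharesSquare F S

/-- Adjacency in `Q(n,k,2,2)`: two (`k`-)faces are adjacent iff they share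
a square. -/
def adj222 {n : ℕ} (D F : Finset (Fin n) × Finset (Fin n)) : Prop :=
  D ≠ F ∧ sharesSquare D F

/-!
The gaussoid axioms are local: the axioms at a 3-face `({i,j,k}|L)` only mention squares of that
face. Embedding a `k`-gaussoid into a `k`-face gives an `n`-gaussoid, because the two premises of
each axiom already force the 3-face into the `k`-face, where the axiom is the transported axiom of
the `k`-gaussoid. If `𝓕` is independent in `Q(n,k,3,2)`, no 3-face meets two faces of `𝓕` in
squares, so on every 3-face the union of gaussoids embedded into the faces of `𝓕` coincides with a
single one of them (or with `∅`), hence the union is a gaussoid. It also determines each piece: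
as `n ≥ 3`, every square lies in a 3-face, so no square lies in two faces of `𝓕`.
-/

namespace Gaussoid

section Local

variable {n : ℕ}

def AxiomsAt (G : Finset (Sq n)) (i j k : Fin n) (L : Finset (Fin n)) : Prop :=
  (({i,j}, L) ∈ G ∧ ({i,k}, insert j L) ∈ G →
      ({i,k}, L) ∈ G ∧ ({i,j}, insert k L) ∈ G) ∧
  (({i,j}, insert k L) ∈ G ∧ ({i,k}, insert j L) ∈ G →
      ({i,j}, L) ∈ G ∧ ({i,k}, L) ∈ G) ∧
  (({i,j}, L) ∈ G ∧ ({i,k}, L) ∈ G →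
      ({i,j}, insert k L) ∈ G ∧ ({i,k}, insert j L) ∈ G) ∧
  (({i,j}, L) ∈ G ∧ ({i,j}, insert k L) ∈ G →
      ({i,k}, L) ∈ G ∨ ({j,k}, L) ∈ G)

theorem axiomsAt_empty (i j k : Fin n) (L : Finset (Fin n)) : AxiomsAt ∅ i j k L := by
  simp [AxiomsAt]

theorem faceLe_pair {i j k a b : Fin n} {L W : Finset (Fin n)}
    (ha : a ∈ ({i, j, k} : Finset (Fin n))) (hb : b ∈ ({i, j, k} : Finset (Fin n)))
    (hLW : L ⊆ W) (hW : W ⊆ {i, j, k} ∪ L) : faceLe ({a, b}, W) ({i, j, k}, L) :=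
  ⟨Finset.insert_subset ha (Finset.singleton_subset_iff.2 hb), hLW, hW⟩

theorem axiomsAt_congr {G H : Finset (Sq n)} {i j k : Fin n} {L : Finset (Fin n)}
    (h : ∀ y, faceLe y ({i, j, k}, L) → (y ∈ G ↔ y ∈ H)) :
    AxiomsAt G i j k L ↔ AxiomsAt H i j k L := by
  have hL : ∀ a b, a ∈ ({i, j, k} : Finset (Fin n)) → b ∈ ({i, j, k} : Finset (Fin n)) →
      ((({a, b}, L) ∈ G) ↔ ({a, b}, L) ∈ H) := fun a b ha hb =>
    h _ (faceLe_pair ha hb subset_rfl Finset.subset_union_right)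
  have hins : ∀ a b c, a ∈ ({i, j, k} : Finset (Fin n)) → b ∈ ({i, j, k} : Finset (Fin n)) →
      c ∈ ({i, j, k} : Finset (Fin n)) →
      ((({a, b}, insert c L) ∈ G) ↔ ({a, b}, insert c L) ∈ H) := fun a b c ha hb hc =>
    h _ (faceLe_pair ha hb (Finset.subset_insert _ _)
      (Finset.insert_subset (Finset.mem_union_left _ hc) Finset.subset_union_right))
  simp only [AxiomsAt, hL i j (by simp) (by simp), hL i k (by simp) (by simp),
    hL j k (by simp) (by simp), hins i j k (by simp) (by simp) (by simp),
    hins i k j (by simp) (by simp) (by simp)]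

end Local

section Embedding

variable {n k : ℕ} {e : Fin k ↪ Fin n} {K : Finset (Fin n)}

/-- The paper's embedding `(ij|K) ↦ (ij|K ∪ M)` into the face `(L|M)`, with `e` enumerating `L`. -/
def embSq (e : Fin k ↪ Fin n) (K : Finset (Fin n)) (x : Sq k) : Sq n :=
  (x.1.map e, x.2.map e ∪ K)

theorem disjoint_map_of_forall_notMem (hK : ∀ a, e a ∉ K) (s : Finset (Fin k)) :
    Disjoint (s.map e) K := by
  simp only [Finset.disjoint_left, Finset.mem_map]
  rintro _ ⟨a, -, rfl⟩
  exact hK a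

theorem map_union_injective (hK : ∀ a, e a ∉ K) :
    Function.Injective fun M : Finset (Fin k) => M.map e ∪ K := by
  intro M M' h
  apply Finset.map_injective e
  simpa [Finset.union_sdiff_cancel_right (disjoint_map_of_forall_notMem hK _)]
    using congrArg (· \ K) h

theorem embSq_injective (hK : ∀ a, e a ∉ K) : Function.Injective (embSq e K) :=
  fun _ _ h => Prod.ext (Finset.map_injective e (congrArg Prod.fst h))
    (map_union_injective hK (congrArg Prod.snd h))

theorem faceLe_of_mem_image_embSq {I : Finset (Fin n)} (hI : ∀ a, e a ∈ I)
    {A : Finset (Sq k)} {y : Sq n} (hy : y ∈ A.image (embSq e K)) : faceLe y (I, K) := by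
  obtain ⟨x, -, rfl⟩ := Finset.mem_image.1 hy
  refine ⟨?_, Finset.subset_union_right, Finset.union_subset_union ?_ subset_rfl⟩ <;>
  · intro z hz
    obtain ⟨a, -, rfl⟩ := Finset.mem_map.1 hz
    exact hI a

theorem mem_image_embSq_pair (hK : ∀ a, e a ∉ K) {A : Finset (Sq k)} {a b : Fin k}
    {M : Finset (Fin k)} :
    ({e a, e b}, M.map e ∪ K) ∈ A.image (embSq e K) ↔ ({a, b}, M) ∈ A := by
  rw [← (embSq_injective hK).mem_finset_image]
  simp [embSq]

theorem mem_image_embSq_pair_insert (hK : ∀ a, e a ∉ K) {A : Finset (Sq k)} {a b c : Fin k}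
    {M : Finset (Fin k)} :
    ({e a, e b}, insert (e c) (M.map e ∪ K)) ∈ A.image (embSq e K) ↔
      ({a, b}, insert c M) ∈ A := by
  rw [← mem_image_embSq_pair hK, Finset.map_insert, Finset.insert_union]

theorem mem_range_of_mem_image_embSq {A : Finset (Sq k)} {u v : Fin n} {W : Finset (Fin n)}
    (h : ({u, v}, W) ∈ A.image (embSq e K)) :
    u ∈ Set.range e ∧ v ∈ Set.range e ∧ W ∈ Set.range fun M : Finset (Fin k) => M.map e ∪ K := by
  obtain ⟨x, -, hx⟩ := Finset.mem_image.1 h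
  simp only [embSq, Prod.mk.injEq] at hx
  have hmem : ∀ w ∈ ({u, v} : Finset (Fin n)), w ∈ Set.range e := fun w hw => by
    obtain ⟨a, -, rfl⟩ := Finset.mem_map.1 (hx.1 ▸ hw)
    exact ⟨a, rfl⟩
  exact ⟨hmem u (by simp), hmem v (by simp), x.2, hx.2⟩

theorem eq_map_union_erase (hK : ∀ a, e a ∉ K) {c : Fin k} {L : Finset (Fin n)}
    {M : Finset (Fin k)} (h : insert (e c) L = M.map e ∪ K) (hc : e c ∉ L) :
    L = (M.erase c).map e ∪ K := by
  rw [← Finset.erase_insert hc, h, Finset.erase_union_distrib, Finset.map_erase,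
    Finset.erase_eq_of_notMem (hK c)]

theorem axiomsAt_image_embSq (hK : ∀ a, e a ∉ K) {A : Finset (Sq k)} (hA : IsGaussoid k A)
    {a b c : Fin k} {L : Finset (Fin k)} (hab : a ≠ b) (hac : a ≠ c) (hbc : b ≠ c)
    (haL : a ∉ L) (hbL : b ∉ L) (hcL : c ∉ L) :
    AxiomsAt (A.image (embSq e K)) (e a) (e b) (e c) (L.map e ∪ K) := by
  simp only [AxiomsAt, mem_image_embSq_pair hK, mem_image_embSq_pair_insert hK]
  exact hA.2 a b c L hab hac hbc haL hbL hcL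

theorem isGaussoid_image_embSq (hK : ∀ a, e a ∉ K) {A : Finset (Sq k)} (hA : IsGaussoid k A) :
    IsGaussoid n (A.image (embSq e K)) := by
  refine ⟨fun y hy => ?_, fun i j l L hij hil hjl hiL hjL hlL => ?_⟩
  · obtain ⟨x, hx, rfl⟩ := Finset.mem_image.1 hy
    obtain ⟨hcard, hdisj⟩ := hA.1 x hx
    refine ⟨by simpa [embSq] using hcard, Finset.disjoint_union_right.2
      ⟨(Finset.disjoint_map e).2 hdisj, disjoint_map_of_forall_notMem hK _⟩⟩
  have lift : i ∈ Set.range e → j ∈ Set.range e → l ∈ Set.range e →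
      (L ∈ Set.range fun M : Finset (Fin k) => M.map e ∪ K) →
      AxiomsAt (A.image (embSq e K)) i j l L := by
    rintro ⟨a, rfl⟩ ⟨b, rfl⟩ ⟨c, rfl⟩ ⟨L, rfl⟩
    have hL : ∀ {d}, e d ∉ L.map e ∪ K → d ∉ L := fun h hd =>
      h (Finset.mem_union_left _ (Finset.mem_map_of_mem e hd))
    exact axiomsAt_image_embSq hK hA (ne_of_apply_ne e hij) (ne_of_apply_ne e hil)
      (ne_of_apply_ne e hjl) (hL hiL) (hL hjL) (hL hlL)
  refine ⟨fun ⟨h₁, h₂⟩ => ?_, fun ⟨h₁, h₂⟩ => ?_, fun ⟨h₁, h₂⟩ => ?_, fun ⟨h₁, h₂⟩ => ?_⟩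
  · obtain ⟨hi, hj, hL⟩ := mem_range_of_mem_image_embSq h₁
    exact (lift hi hj (mem_range_of_mem_image_embSq h₂).2.1 hL).1 ⟨h₁, h₂⟩
  · obtain ⟨hi, hj, M, hM⟩ := mem_range_of_mem_image_embSq h₁
    obtain ⟨-, ⟨c, rfl⟩, -⟩ := mem_range_of_mem_image_embSq h₂
    exact (lift hi hj ⟨c, rfl⟩ ⟨_, (eq_map_union_erase hK hM.symm hlL).symm⟩).2.1 ⟨h₁, h₂⟩
  · obtain ⟨hi, hj, hL⟩ := mem_range_of_mem_image_embSq h₁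
    exact (lift hi hj (mem_range_of_mem_image_embSq h₂).2.1 hL).2.2.1 ⟨h₁, h₂⟩
  · obtain ⟨hi, hj, L₀, rfl⟩ := mem_range_of_mem_image_embSq h₁
    obtain ⟨-, -, M, hM⟩ := mem_range_of_mem_image_embSq h₂
    have hl : l ∈ M.map e ∪ K := by
      rw [show M.map e ∪ K = _ from hM]
      exact Finset.mem_insert_self l _
    obtain hl | hl := Finset.mem_union.1 hl
    · obtain ⟨c, -, rfl⟩ := Finset.mem_map.1 hl
      exact (lift hi hj ⟨c, rfl⟩ ⟨L₀, rfl⟩).2.2.2 ⟨h₁, h₂⟩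
    · exact absurd (Finset.mem_union_right _ hl) hlL

end Embedding

section Gluing

variable {n : ℕ}

theorem exists_threeFace_faceLe (hn : 3 ≤ n) {y : Sq n} (hy : y.1.card = 2)
    (hyd : Disjoint y.1 y.2) :
    ∃ S : Finset (Fin n) × Finset (Fin n),
      S.1.card = 3 ∧ Disjoint S.1 S.2 ∧ faceLe y S := by
  obtain ⟨m, hm⟩ : ∃ m, m ∉ y.1 := by
    by_contra! h
    have := Finset.card_le_card (fun m _ => h m : Finset.univ ⊆ y.1)
    simp [hy] at this
    omega
  refine ⟨(insert m y.1, y.2.erase m), by simp [hm, hy], ?_,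
    Finset.subset_insert _ _, Finset.erase_subset _ _, fun x hx => ?_⟩
  · rw [Finset.disjoint_insert_left]
    exact ⟨Finset.notMem_erase m _, hyd.mono_right (Finset.erase_subset _ _)⟩
  · by_cases hxm : x = m
    · simp [hxm]
    · exact Finset.mem_union_right _ (Finset.mem_erase.2 ⟨hxm, hx⟩)

variable {ι : Type*} {F : ι → Finset (Fin n) × Finset (Fin n)}

theorem eq_of_sharesSquare_threeFace (hF : Function.Injective F)
    (hindep : ∀ t t', ¬ adj332 (F t) (F t')) {t t' : ι} {S : Finset (Fin n) × Finset (Fin n)}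
    (hS : S.1.card = 3) (hSd : Disjoint S.1 S.2)
    (h : sharesSquare (F t) S) (h' : sharesSquare (F t') S) : t = t' :=
  hF (not_not.1 fun hne => hindep t t' ⟨hne, S, hS, hSd, h, h'⟩)

theorem eq_of_faceLe_of_faceLe (hn : 3 ≤ n) (hF : Function.Injective F)
    (hindep : ∀ t t', ¬ adj332 (F t) (F t')) {t t' : ι} {y : Sq n}
    (hy : y.1.card = 2) (hyd : Disjoint y.1 y.2) (h : faceLe y (F t)) (h' : faceLe y (F t')) :
    t = t' := by
  obtain ⟨S, hS, hSd, hyS⟩ := exists_threeFace_faceLe hn hy hyd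
  exact eq_of_sharesSquare_threeFace hF hindep hS hSd ⟨y, hy, hyd, h, hyS⟩ ⟨y, hy, hyd, h', hyS⟩

variable [Fintype ι] {G : ι → Finset (Sq n)}

theorem isGaussoid_biUnion (hF : Function.Injective F) (hindep : ∀ t t', ¬ adj332 (F t) (F t'))
    (hG : ∀ t, IsGaussoid n (G t)) (hsupp : ∀ t, ∀ y ∈ G t, faceLe y (F t)) :
    IsGaussoid n (Finset.univ.biUnion G) := by
  refine ⟨fun y hy => ?_, fun i j k L hij hik hjk hiL hjL hkL => ?_⟩
  · obtain ⟨t, -, hyt⟩ := Finset.mem_biUnion.1 hy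
    exact (hG t).1 y hyt
  have hS : ({i, j, k} : Finset (Fin n)).card = 3 := by simp [hij, hik, hjk]
  have hSd : Disjoint ({i, j, k} : Finset (Fin n)) L := by simp [hiL, hjL, hkL]
  by_cases hsq : ∃ t, ∃ y ∈ G t, faceLe y ({i, j, k}, L)
  · obtain ⟨t, y, hyt, hyS⟩ := hsq
    refine (axiomsAt_congr fun y' hy'S => ⟨fun hy' => ?_, fun hy' => ?_⟩).2
      ((hG t).2 i j k L hij hik hjk hiL hjL hkL)
    · obtain ⟨t', -, hy't'⟩ := Finset.mem_biUnion.1 hy'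
      obtain ⟨hy'c, hy'd⟩ := (hG t').1 y' hy't'
      obtain ⟨hyc, hyd⟩ := (hG t).1 y hyt
      obtain rfl := eq_of_sharesSquare_threeFace hF hindep hS hSd
        ⟨y', hy'c, hy'd, hsupp t' y' hy't', hy'S⟩ ⟨y, hyc, hyd, hsupp t y hyt, hyS⟩
      exact hy't'
    · exact Finset.mem_biUnion.2 ⟨t, Finset.mem_univ t, hy'⟩
  · refine (axiomsAt_congr fun y hyS => ?_).2 (axiomsAt_empty i j k L)
    simpa using fun t hyt => hsq ⟨t, y, hyt, hyS⟩

theorem mem_biUnion_iff_of_faceLe (hn : 3 ≤ n) (hF : Function.Injective F)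
    (hindep : ∀ t t', ¬ adj332 (F t) (F t')) (hsupp : ∀ t, ∀ y ∈ G t, faceLe y (F t))
    {t : ι} {y : Sq n} (hy : y.1.card = 2) (hyd : Disjoint y.1 y.2) (hyt : faceLe y (F t)) :
    y ∈ Finset.univ.biUnion G ↔ y ∈ G t := by
  refine ⟨fun h => ?_, fun h => Finset.mem_biUnion.2 ⟨t, Finset.mem_univ t, h⟩⟩
  obtain ⟨t', -, hyt'⟩ := Finset.mem_biUnion.1 h
  obtain rfl := eq_of_faceLe_of_faceLe hn hF hindep hy hyd (hsupp t' y hyt') hyt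
  exact hyt'

theorem eq_of_biUnion_eq (hn : 3 ≤ n) (hF : Function.Injective F)
    (hindep : ∀ t t', ¬ adj332 (F t) (F t')) {G' : ι → Finset (Sq n)}
    (hG : ∀ t, ∀ y ∈ G t, y.1.card = 2 ∧ Disjoint y.1 y.2)
    (hG' : ∀ t, ∀ y ∈ G' t, y.1.card = 2 ∧ Disjoint y.1 y.2)
    (hsupp : ∀ t, ∀ y ∈ G t, faceLe y (F t)) (hsupp' : ∀ t, ∀ y ∈ G' t, faceLe y (F t))
    (h : Finset.univ.biUnion G = Finset.univ.biUnion G') : G = G' := by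
  funext t
  ext y
  constructor
  · intro hy
    obtain ⟨hyc, hyd⟩ := hG t y hy
    rw [← mem_biUnion_iff_of_faceLe hn hF hindep hsupp' hyc hyd (hsupp t y hy), ← h]
    exact Finset.mem_biUnion.2 ⟨t, Finset.mem_univ t, hy⟩
  · intro hy
    obtain ⟨hyc, hyd⟩ := hG' t y hy
    rw [← mem_biUnion_iff_of_faceLe hn hF hindep hsupp hyc hyd (hsupp' t y hy), h]
    exact Finset.mem_biUnion.2 ⟨t, Finset.mem_univ t, hy⟩

end Gluing

theorem card_pow_le_of_independent {n k : ℕ} (hk : 3 ≤ k) {ι : Type*} [Fintype ι]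
    {F : ι → Finset (Fin n) × Finset (Fin n)} (hF : Function.Injective F)
    (hindep : ∀ t t', ¬ adj332 (F t) (F t')) (e : ι → Fin k ↪ Fin n)
    (he : ∀ t a, e t a ∈ (F t).1) (heK : ∀ t a, e t a ∉ (F t).2) :
    Nat.card {A : Finset (Sq k) // IsGaussoid k A} ^ Nat.card ι ≤
      Nat.card {G : Finset (Sq n) // IsGaussoid n G} := by
  let embed (φ : ι → {A : Finset (Sq k) // IsGaussoid k A}) (t : ι) : Finset (Sq n) :=
    (φ t).1.image (embSq (e t) (F t).2)
  have hembed φ t : IsGaussoid n (embed φ t) := isGaussoid_image_embSq (heK t) (φ t).2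
  have hsupp φ t : ∀ y ∈ embed φ t, faceLe y (F t) :=
    fun _ => faceLe_of_mem_image_embSq (he t)
  let glue (φ : ι → {A : Finset (Sq k) // IsGaussoid k A}) :
      {G : Finset (Sq n) // IsGaussoid n G} :=
    ⟨Finset.univ.biUnion (embed φ), isGaussoid_biUnion hF hindep (hembed φ) (hsupp φ)⟩
  have hglue : Function.Injective glue := by
    intro φ φ' h
    funext t
    have hn : 3 ≤ n := hk.trans (by simpa using Fintype.card_le_of_embedding (e t))
    have := eq_of_biUnion_eq hn hF hindep (fun t => (hembed φ t).1) (fun t => (hembed φ' t).1)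
      (hsupp φ) (hsupp φ') (congrArg Subtype.val h)
    exact Subtype.ext (Finset.image_injective (embSq_injective (heK t)) (congrFun this t))
  calc Nat.card {A : Finset (Sq k) // IsGaussoid k A} ^ Nat.card ι
      = Nat.card (ι → {A : Finset (Sq k) // IsGaussoid k A}) := by
        rw [Nat.card_fun]
    _ ≤ Nat.card {G : Finset (Sq n) // IsGaussoid n G} :=
        Nat.card_le_card_of_injective glue hglue

end Gaussoid

theorem stmt_13_general (n k : ℕ) (hk : 3 ≤ k)
    (𝓕 : Finset (Finset (Fin n) × Finset (Fin n)))
    (hfaces : ∀ D ∈ 𝓕, D.1.card = k ∧ Disjoint D.1 D.2)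
    (hindep : ∀ D ∈ 𝓕, ∀ F ∈ 𝓕, ¬ adj332 D F) :
    Nat.card {A : Finset (Sq k) // IsGaussoid k A} ^ 𝓕.card ≤
      Nat.card {G : Finset (Sq n) // IsGaussoid n G} := by
  classical
  let e (D : 𝓕) : Fin k ↪ Fin n := (D.1.1.orderEmbOfFin (hfaces D D.2).1).toEmbedding
  have he (D : 𝓕) (a : Fin k) : e D a ∈ D.1.1 := Finset.orderEmbOfFin_mem _ _ a
  simpa using Gaussoid.card_pow_le_of_independent hk Subtype.val_injective
    (fun D D' => hindep D D.2 D' D'.2) e he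
    (fun D a => Finset.disjoint_left.1 (hfaces D D.2).2 (he D a))

/-- If `𝓕` is an independent set of `k`-faces in `Q(n,k,3,2)` with `k ≥ 3`,
then the number of `n`-gaussoids is at least `|𝔊_k| ^ |𝓕|`. -/
theorem stmt_13 (n k : ℕ) (hk : 3 ≤ k) (hkn : k ≤ n)
    (𝓕 : Finset (Finset (Fin n) × Finset (Fin n)))
    (hfaces : ∀ D ∈ 𝓕, D.1.card = k ∧ Disjoint D.1 D.2)
    (hindep : ∀ D ∈ 𝓕, ∀ F ∈ 𝓕, ¬ adj332 D F) :
    Nat.card {A : Finset (Sq k) // IsGaussoid k A} ^ 𝓕.card ≤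
      Nat.card {G : Finset (Sq n) // IsGaussoid n G} :=
  stmt_13_general n k hk 𝓕 hfaces hindep
end

section
/- Let F be an independent set in Q(n,k,2,2) and suppose there exist c injections f_1,…,f_c from the set of k-gaussoids into the non-k-gaussoid subsets of A_k with pairwise disjoint ranges. Then 2^{|A_n|} / |G_n| ≥ c^{|F|}, i.e., the number of n-gaussoids is at most 2^{|A_n|} / c^{|F|}. -/
/-!
Encode a pair `(G, g)`, with `G` an `n`-gaussoid and `g : 𝓕 → Fin c`, by the subset of `A_n`
obtained from `G` by replacing, on every face `D ∈ 𝓕`, the squares of `G` inside `D` by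
`f_{g D} (G ↘ D) ↗ D`. Since the faces of `𝓕` pairwise share no square, these replacements
happen on disjoint blocks of `A_n` and leave `G` untouched off the blocks. On the block of `D`
the disjointness of the ranges recovers `g D` and the injectivity of `f_{g D}` recovers the minor
`G ↘ D`, hence `G` on that block. So the encoding is injective.
-/

open Finset Function

section BlockReplacement

variable {α ι : Type*} [DecidableEq α] [Fintype ι]

def replaceBlocks (s : ι → Finset α) (G : Finset α) (t : ι → Finset α) : Finset α :=
  (G \ univ.biUnion s) ∪ univ.biUnion t

variable {s t : ι → Finset α} {G G' : Finset α}

theorem replaceBlocks_inter (hs : Pairwise (Disjoint on s)) (ht : ∀ i, t i ⊆ s i) (i : ι) :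
    replaceBlocks s G t ∩ s i = t i := by
  ext x
  simp only [replaceBlocks, mem_inter, mem_union, mem_sdiff, mem_biUnion, mem_univ, true_and]
  constructor
  · rintro ⟨⟨-, hx⟩ | ⟨j, hxj⟩, hxi⟩
    · exact absurd ⟨i, hxi⟩ hx
    · obtain rfl : j = i := by
        by_contra hji
        exact disjoint_left.1 (hs hji) (ht j hxj) hxi
      exact hxj
  · exact fun hx => ⟨Or.inr ⟨i, hx⟩, ht i hx⟩

theorem replaceBlocks_sdiff (ht : ∀ i, t i ⊆ s i) :
    replaceBlocks s G t \ univ.biUnion s = G \ univ.biUnion s := by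
  rw [replaceBlocks, union_sdiff_distrib, _root_.sdiff_idem,
    sdiff_eq_empty_iff_subset.2 (biUnion_mono fun i _ => ht i), union_empty]

theorem eq_of_inter_eq_of_sdiff_eq (h : ∀ i, G ∩ s i = G' ∩ s i)
    (h' : G \ univ.biUnion s = G' \ univ.biUnion s) : G = G' := by
  ext x
  by_cases hx : ∃ i, x ∈ s i
  · obtain ⟨i, hxi⟩ := hx
    simpa [hxi] using congrArg (x ∈ ·) (h i)
  · simpa [hx] using congrArg (x ∈ ·) h'

theorem card_mul_pow_le_two_pow_of_blockCodes {κ : Type*} {P : Finset α → Prop}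
    (V : Finset α) (hPV : ∀ G, P G → G ⊆ V) (s : ι → Finset α) (hsV : ∀ i, s i ⊆ V)
    (hs : Pairwise (Disjoint on s)) (code : ι → κ → {G // P G} → Finset α)
    (hcode_sub : ∀ i j G, code i j G ⊆ s i)
    (hcode : ∀ i j j' G G', code i j G = code i j' G' → j = j' ∧ G.1 ∩ s i = G'.1 ∩ s i) :
    Nat.card {G // P G} * Nat.card κ ^ Nat.card ι ≤ 2 ^ #V := by
  let encode : {G // P G} × (ι → κ) → V.powerset := fun ⟨G, g⟩ =>
    ⟨replaceBlocks s G (fun i => code i (g i) G), mem_powerset.2 <|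
      union_subset (sdiff_subset.trans (hPV G G.2))
        (biUnion_subset.2 fun i _ => (hcode_sub i _ G).trans (hsV i))⟩
  have hencode : encode.Injective := by
    rintro ⟨G, g⟩ ⟨G', g'⟩ hGG'
    have hE := congrArg Subtype.val hGG'
    have hblock (i : ι) : g i = g' i ∧ G.1 ∩ s i = G'.1 ∩ s i := by
      refine hcode i _ _ G G' ?_
      have := congrArg (· ∩ s i) hE
      rwa [replaceBlocks_inter hs (fun i => hcode_sub i (g i) G),
        replaceBlocks_inter hs (fun i => hcode_sub i (g' i) G')] at this
    have hrest : G.1 \ univ.biUnion s = G'.1 \ univ.biUnion s := by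
      have := congrArg (· \ univ.biUnion s) hE
      rwa [replaceBlocks_sdiff (fun i => hcode_sub i (g i) G),
        replaceBlocks_sdiff (fun i => hcode_sub i (g' i) G')] at this
    rw [Subtype.ext (eq_of_inter_eq_of_sdiff_eq (fun i => (hblock i).2) hrest),
      funext fun i => (hblock i).1]
  calc Nat.card {G // P G} * Nat.card κ ^ Nat.card ι = Nat.card ({G // P G} × (ι → κ)) := by
        rw [Nat.card_prod, Nat.card_fun]
    _ ≤ Nat.card V.powerset := Nat.card_le_card_of_injective encode hencode
    _ = 2 ^ #V := by rw [Nat.card_eq_finsetCard, card_powerset]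

end BlockReplacement

/- `squares n` is `A_n`; `embedSq D hD B` and `minor D hD G` are `B ↗ D` and `G ↘ D`, the free
coordinates of the face `D` being enumerated increasingly. -/
namespace Cube

variable {n k : ℕ}

def squares (n : ℕ) : Finset (Sq n) :=
  univ.filter fun x => x.1.card = 2 ∧ Disjoint x.1 x.2

theorem mem_squares {x : Sq n} : x ∈ squares n ↔ x.1.card = 2 ∧ Disjoint x.1 x.2 := by
  simp [squares]

theorem card_squares : #(squares n) = n.choose 2 * 2 ^ (n - 2) := by
  have hsplit : squares n = (powersetCard 2 (univ : Finset (Fin n))).biUnion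
      fun p => pᶜ.powerset.image (p, ·) := by
    ext ⟨p, L⟩
    simp [mem_squares, subset_compl_iff_disjoint_left]
  rw [hsplit, card_biUnion, sum_const_nat, card_powersetCard, card_univ, Fintype.card_fin]
  · intro p hp
    rw [card_image_of_injective _ (Prod.mk_right_injective p), card_powerset, card_compl,
      (mem_powersetCard.1 hp).2, Fintype.card_fin]
  · intro p _ q _ hpq
    simp only [onFun, disjoint_left, mem_image]
    rintro _ ⟨L, -, rfl⟩ ⟨L', -, h⟩
    exact hpq (Prod.ext_iff.1 h).1.symm

theorem _root_.IsGaussoid.subset_squares {G : Finset (Sq n)} (hG : IsGaussoid n G) :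
    G ⊆ squares n :=
  fun x hx => mem_squares.2 (hG.1 x hx)

instance (D F : Finset (Fin n) × Finset (Fin n)) : Decidable (faceLe D F) :=
  inferInstanceAs (Decidable (_ ∧ _ ∧ _))

def squaresIn (D : Finset (Fin n) × Finset (Fin n)) : Finset (Sq n) :=
  (squares n).filter (faceLe · D)

theorem mem_squaresIn {D : Finset (Fin n) × Finset (Fin n)} {x : Sq n} :
    x ∈ squaresIn D ↔ (x.1.card = 2 ∧ Disjoint x.1 x.2) ∧ faceLe x D := by
  rw [squaresIn, mem_filter, mem_squares]

theorem disjoint_squaresIn_iff {D F : Finset (Fin n) × Finset (Fin n)} :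
    Disjoint (squaresIn D) (squaresIn F) ↔ ¬ sharesSquare D F := by
  simp only [disjoint_left, mem_squaresIn, sharesSquare]
  aesop

variable (D : Finset (Fin n) × Finset (Fin n)) (hD : D.1.card = k)

def faceCoord : Fin k ↪ Fin n :=
  (D.1.orderEmbOfFin hD).toEmbedding

theorem map_faceCoord_subset (s : Finset (Fin k)) : s.map (faceCoord D hD) ⊆ D.1 :=
  map_orderEmbOfFin_univ D.1 hD ▸ map_subset_map.2 (subset_univ s)

theorem exists_map_faceCoord_eq {s : Finset (Fin n)} (hs : s ⊆ D.1) :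
    ∃ t : Finset (Fin k), t.map (faceCoord D hD) = s := by
  rw [← map_orderEmbOfFin_univ D.1 hD] at hs
  obtain ⟨t, -, rfl⟩ := subset_map_iff.1 hs
  exact ⟨t, rfl⟩

theorem faceCoord_notMem_map {a : Fin k} {s : Finset (Fin k)} (ha : a ∉ s)
    (hdisj : Disjoint D.1 D.2) : faceCoord D hD a ∉ s.map (faceCoord D hD) ∪ D.2 := by
  rw [mem_union, mem_map', not_or]
  exact ⟨ha, disjoint_left.1 hdisj <|
    map_faceCoord_subset D hD {a} (mem_map_of_mem _ (mem_singleton_self a))⟩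

def embedSq (y : Sq k) : Sq n :=
  (y.1.map (faceCoord D hD), y.2.map (faceCoord D hD) ∪ D.2)

variable {D hD}

theorem embedSq_injective (hdisj : Disjoint D.1 D.2) : Injective (embedSq D hD) := by
  rintro ⟨p, L⟩ ⟨p', L'⟩ h
  simp only [embedSq, Prod.mk.injEq] at h
  have hL := congrArg (· \ D.2) h.2
  simp only [union_sdiff_right, sdiff_eq_self_of_disjoint
    (disjoint_of_subset_left (map_faceCoord_subset D hD _) hdisj)] at hL
  rw [map_injective _ h.1, map_injective _ hL]

theorem faceLe_embedSq (y : Sq k) : faceLe (embedSq D hD y) D :=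
  ⟨map_faceCoord_subset D hD y.1, subset_union_right,
    union_subset_union_left (map_faceCoord_subset D hD y.2)⟩

theorem embedSq_mem_squares_iff (hdisj : Disjoint D.1 D.2) {y : Sq k} :
    embedSq D hD y ∈ squares n ↔ y ∈ squares k := by
  simp only [mem_squares, embedSq, card_map, disjoint_union_right, disjoint_map,
    disjoint_of_subset_left (map_faceCoord_subset D hD y.1) hdisj, and_true]

theorem image_embedSq_subset_squaresIn (hdisj : Disjoint D.1 D.2) {B : Finset (Sq k)}
    (hB : B ⊆ squares k) : B.image (embedSq D hD) ⊆ squaresIn D := by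
  simp only [image_subset_iff, mem_squaresIn, ← mem_squares, embedSq_mem_squares_iff hdisj]
  exact fun y hy => ⟨hB hy, faceLe_embedSq y⟩

theorem exists_embedSq_eq {x : Sq n} (hx : faceLe x D) : ∃ y, embedSq D hD y = x := by
  obtain ⟨q, K⟩ := x
  obtain ⟨hq, hK, hKD⟩ := hx
  obtain ⟨p, rfl⟩ := exists_map_faceCoord_eq D hD hq
  obtain ⟨L, hL⟩ := exists_map_faceCoord_eq D hD (s := K \ D.2) fun a ha => by
    have := mem_sdiff.1 ha
    exact (mem_union.1 (hKD this.1)).resolve_right this.2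
  refine ⟨(p, L), Prod.ext rfl ?_⟩
  simp only [embedSq, hL, sdiff_union_of_subset hK]

variable (D hD) in
def minor (G : Finset (Sq n)) : Finset (Sq k) :=
  univ.filter fun y => embedSq D hD y ∈ G

theorem mem_minor {G : Finset (Sq n)} {y : Sq k} : y ∈ minor D hD G ↔ embedSq D hD y ∈ G := by
  simp [minor]

theorem isGaussoid_minor (hdisj : Disjoint D.1 D.2) {G : Finset (Sq n)} (hG : IsGaussoid n G) :
    IsGaussoid k (minor D hD G) := by
  refine ⟨fun y hy => mem_squares.1 <| (embedSq_mem_squares_iff hdisj).1 <|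
    hG.subset_squares (mem_minor.1 hy), ?_⟩
  intro i j l L hij hil hjl hiL hjL hlL
  set e := faceCoord D hD
  have hmem (a b : Fin k) (M : Finset (Fin k)) :
      ({a, b}, M) ∈ minor D hD G ↔ ({e a, e b}, M.map e ∪ D.2) ∈ G := by
    simp only [mem_minor, embedSq, map_insert, map_singleton, e]
  have hins (a : Fin k) (M : Finset (Fin k)) :
      (insert a M).map e ∪ D.2 = insert (e a) (M.map e ∪ D.2) := by
    rw [map_insert, insert_union]
  simpa only [hmem, hins] using hG.2 (e i) (e j) (e l) (L.map e ∪ D.2)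
    (e.injective.ne hij) (e.injective.ne hil) (e.injective.ne hjl)
    (faceCoord_notMem_map D hD hiL hdisj) (faceCoord_notMem_map D hD hjL hdisj)
    (faceCoord_notMem_map D hD hlL hdisj)

theorem inter_squaresIn_eq_image_minor {G : Finset (Sq n)} (hG : G ⊆ squares n) :
    G ∩ squaresIn D = (minor D hD G).image (embedSq D hD) := by
  ext x
  simp only [mem_inter, mem_squaresIn, mem_image, mem_minor]
  constructor
  · rintro ⟨hx, -, hxD⟩
    obtain ⟨y, rfl⟩ := exists_embedSq_eq (hD := hD) hxD
    exact ⟨y, hx, rfl⟩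
  · rintro ⟨y, hy, rfl⟩
    exact ⟨hy, mem_squares.1 (hG hy), faceLe_embedSq y⟩

end Cube

open Cube in
theorem stmt_14_general (n k c : ℕ)
    (𝓕 : Finset (Finset (Fin n) × Finset (Fin n)))
    (hfaces : ∀ D ∈ 𝓕, D.1.card = k ∧ Disjoint D.1 D.2)
    (hindep : ∀ D ∈ 𝓕, ∀ F ∈ 𝓕, ¬ adj222 D F)
    (f : Fin c → {A : Finset (Sq k) // IsGaussoid k A} →
      {B : Finset (Sq k) // (∀ x ∈ B, x.1.card = 2 ∧ Disjoint x.1 x.2) ∧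
        ¬ IsGaussoid k B})
    (hinj : ∀ i, Function.Injective (f i))
    (hdisj : ∀ i j, i ≠ j → ∀ A B, (f i A).1 ≠ (f j B).1) :
    Nat.card {G : Finset (Sq n) // IsGaussoid n G} * c ^ 𝓕.card ≤
      2 ^ (n.choose 2 * 2 ^ (n - 2)) := by
  have hcard (D : 𝓕) : D.1.1.card = k := (hfaces D.1 D.2).1
  have hsep (D : 𝓕) : Disjoint D.1.1 D.1.2 := (hfaces D.1 D.2).2
  let minorOn (D : 𝓕) (G : {G // IsGaussoid n G}) : {A // IsGaussoid k A} :=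
    ⟨minor D.1 (hcard D) G.1, isGaussoid_minor (hsep D) G.2⟩
  let code (D : 𝓕) (j : Fin c) (G : {G // IsGaussoid n G}) : Finset (Sq n) :=
    (f j (minorOn D G)).1.image (embedSq D.1 (hcard D))
  have hcode_sub (D : 𝓕) j G : code D j G ⊆ squaresIn D.1 :=
    image_embedSq_subset_squaresIn (hsep D) fun y hy => mem_squares.2 ((f j _).2.1 y hy)
  have hcode (D : 𝓕) j j' G G' (h : code D j G = code D j' G') :
      j = j' ∧ G.1 ∩ squaresIn D.1 = G'.1 ∩ squaresIn D.1 := by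
    have hf := image_injective (embedSq_injective (hsep D)) h
    obtain rfl : j = j' := by_contra fun hjj' => hdisj j j' hjj' _ _ hf
    have hminor := congrArg Subtype.val (hinj j (Subtype.ext hf))
    refine ⟨rfl, ?_⟩
    rw [inter_squaresIn_eq_image_minor (hD := hcard D) G.2.subset_squares,
      inter_squaresIn_eq_image_minor (hD := hcard D) G'.2.subset_squares]
    exact congrArg _ hminor
  calc Nat.card {G // IsGaussoid n G} * c ^ #𝓕
      = Nat.card {G // IsGaussoid n G} * Nat.card (Fin c) ^ Nat.card 𝓕 := by
        rw [Nat.card_eq_fintype_card (α := Fin c), Fintype.card_fin, Nat.card_eq_finsetCard]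
    _ ≤ 2 ^ #(squares n) :=
        card_mul_pow_le_two_pow_of_blockCodes (squares n) (fun _ hG => hG.subset_squares)
          (fun D : 𝓕 => squaresIn D.1) (fun _ => filter_subset _ _)
          (fun D F hDF => disjoint_squaresIn_iff.2 fun h =>
            hindep D.1 D.2 F.1 F.2 ⟨Subtype.coe_ne_coe.2 hDF, h⟩)
          code hcode_sub hcode
    _ = 2 ^ (n.choose 2 * 2 ^ (n - 2)) := by rw [card_squares]

/-- If `𝓕` is an independent set of `k`-faces in `Q(n,k,2,2)` and there are
`c` injections from the set of `k`-gaussoids into the non-gaussoid subsets of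
`A_k`, with pairwise disjoint ranges, then `|𝔊_n| · c^|𝓕|` is at most
`2^{|A_n|}` where `|A_n| = C(n,2)·2^{n-2}`; i.e.
`2^{|A_n|} / |𝔊_n| ≥ c^{|𝓕|}`. -/
theorem stmt_14 (n k c : ℕ) (hk : 3 ≤ k) (hkn : k ≤ n)
    (𝓕 : Finset (Finset (Fin n) × Finset (Fin n)))
    (hfaces : ∀ D ∈ 𝓕, D.1.card = k ∧ Disjoint D.1 D.2)
    (hindep : ∀ D ∈ 𝓕, ∀ F ∈ 𝓕, ¬ adj222 D F)
    (f : Fin c → {A : Finset (Sq k) // IsGaussoid k A} →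
      {B : Finset (Sq k) // (∀ x ∈ B, x.1.card = 2 ∧ Disjoint x.1 x.2) ∧
        ¬ IsGaussoid k B})
    (hinj : ∀ i, Function.Injective (f i))
    (hdisj : ∀ i j, i ≠ j → ∀ A B, (f i A).1 ≠ (f j B).1) :
    Nat.card {G : Finset (Sq n) // IsGaussoid n G} * c ^ 𝓕.card ≤
      2 ^ (n.choose 2 * 2 ^ (n - 2)) :=
  stmt_14_general n k c 𝓕 hfaces hindep f hinj hdisj
end

section
/- For n ≥ 5, the number of n-gaussoids satisfies 2^{(1/3)·n·2^{n-6}} ≤ |G_n| ≤ 2^{C(n,2)·2^{n-2}} / 2^{(4/9)·n(n-1)·2^{n-6}}. In particular, log₂|G_n| ∈ Ω(n·2^n) ∩ O(n²·2^n), so the number of gaussoids grows doubly exponentially in n. -/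
/-! The squares `({2t, 2t+1}, K)` with `|K|` even never meet the hypotheses of (G1)–(G4): two
of them whose pairs share an index have the same pair, and contexts of even size never differ by
a single element. So every set of them is a gaussoid, and there are `⌊n/2⌋·2^(n-3)` of them.

For the upper bound, every `i < j` with `j` even, `k = j + 1` and context `L` gives a quad of
squares `(ij|L), (ij|Lk), (ik|L), (ik|Lj)`. Distinct quads are disjoint, and by (G1)–(G3) a
gaussoid meets a quad in only 9 of the 16 possible ways. With `Q = ⌊n/2⌋(⌊n/2⌋-1)·2^(n-3)`
quads this gives `|G_n| ≤ 2^|A_n| (9/16)^Q`, and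
`(16/9)^Q ≥ 2^(4Q/5) ≥ 2^((4/9)·n(n-1)·2^(n-6))`. -/

namespace Gaussoid

open Finset

section Counting

variable {α ι κ : Type*} [DecidableEq α]

theorem erase_ite_insert {a : α} {s : Finset α} (hs : a ∉ s) (p : Prop) [Decidable p] :
    (if p then insert a s else s).erase a = s := by
  split_ifs
  · exact erase_insert hs
  · exact erase_eq_of_notMem hs

theorem mem_ite_insert_iff {a : α} {s : Finset α} (hs : a ∉ s) (p : Prop) [Decidable p] :
    a ∈ (if p then insert a s else s) ↔ p := by
  split_ifs with h <;> simp [h, hs]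

theorem ite_insert_inj {a : α} {s t : Finset α} (hs : a ∉ s) (ht : a ∉ t) {p q : Prop}
    [Decidable p] [Decidable q]
    (h : (if p then insert a s else s) = if q then insert a t else t) : (p ↔ q) ∧ s = t :=
  ⟨(mem_ite_insert_iff hs p).symm.trans (h ▸ mem_ite_insert_iff ht q),
    (erase_ite_insert hs p).symm.trans (h ▸ erase_ite_insert ht q)⟩

theorem two_pow_le_card_filter_even {s : Finset α} (hs : s.Nonempty) :
    2 ^ (#s - 1) ≤ #{K ∈ s.powerset | Even #K} := by
  obtain ⟨a, ha⟩ := hs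
  have hnot : ∀ K ∈ (s.erase a).powerset, a ∉ K := fun K hK h =>
    (notMem_erase a s) (mem_powerset.mp hK h)
  have hfix : ∀ K ∈ (s.erase a).powerset,
      (if Odd #K then insert a K else K) ∈ {K ∈ s.powerset | Even #K} := by
    intro K hK
    have haK := hnot K hK
    have hKs : K ⊆ s := (mem_powerset.mp hK).trans (erase_subset a s)
    split_ifs with ho
    · simpa [insert_subset_iff, ha, hKs, card_insert_of_notMem haK, Nat.even_add_one] using ho
    · simpa [hKs] using ho
  calc 2 ^ (#s - 1) = #(s.erase a).powerset := by rw [card_powerset, card_erase_of_mem ha]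
    _ ≤ _ := card_le_card_of_injOn _ hfix fun K hK L hL h =>
      (ite_insert_inj (hnot K hK) (hnot L hL) h).2

variable [DecidableEq ι] [Fintype κ]

-- A member `G ⊆ S` is determined by its patterns on the disjoint blocks `b q` and by `G` outside
-- the blocks.
theorem natCard_mul_two_pow_le_of_patterns {p : Finset α → Prop} (S : Finset α) (I : Finset ι)
    (b : ι → κ → α)
    (hb : Set.InjOn (Function.uncurry b) ((I ×ˢ univ : Finset (ι × κ)) : Set (ι × κ)))
    (hbS : ∀ q ∈ I, ∀ r, b q r ∈ S) (hpS : ∀ G, p G → G ⊆ S) (P : Finset (κ → Bool))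
    (hpP : ∀ G, p G → ∀ q ∈ I, (fun r => decide (b q r ∈ G)) ∈ P) :
    Nat.card {G // p G} * 2 ^ (#I * Fintype.card κ) ≤ #P ^ #I * 2 ^ #S := by
  set C := (I ×ˢ univ).image (Function.uncurry b)
  have hCS : C ⊆ S := by
    simp only [C, image_subset_iff, mem_product]
    exact fun x hx => hbS x.1 hx.1 x.2
  have hC : #C = #I * Fintype.card κ := by rw [card_image_of_injOn hb, card_product, card_univ]
  set T := (I.pi fun _ => P) ×ˢ (S \ C).powerset
  let Φ : {G // p G} → T := fun G =>
    ⟨(fun q _ r => decide (b q r ∈ G.1), G.1 \ C), mem_product.mpr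
      ⟨mem_pi.mpr (hpP G.1 G.2), mem_powerset.mpr (sdiff_subset_sdiff (hpS _ G.2) le_rfl)⟩⟩
  have hΦ : Function.Injective Φ := by
    intro G G' h
    have hpat : (fun q (_ : q ∈ I) r => decide (b q r ∈ G.1)) =
        fun q _ r => decide (b q r ∈ G'.1) :=
      congrArg (fun x => x.1.1) h
    have hrest : G.1 \ C = G'.1 \ C := congrArg (fun x => x.1.2) h
    ext x
    by_cases hx : x ∈ C
    · obtain ⟨⟨q, r⟩, hqr, rfl⟩ := mem_image.mp hx
      simpa using congrFun (congrFun (congrFun hpat q) (mem_product.mp hqr).1) r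
    · simpa [hx] using congrArg (x ∈ ·) hrest
  rw [← hC]
  calc Nat.card {G // p G} * 2 ^ #C ≤ Nat.card T * 2 ^ #C :=
        Nat.mul_le_mul_right _ (Nat.card_le_card_of_injective Φ hΦ)
    _ = #P ^ #I * 2 ^ #S := by
      rw [Nat.card_eq_finsetCard, card_product, card_pi, prod_const, card_powerset,
        card_sdiff_of_subset hCS, mul_assoc, ← pow_add, Nat.sub_add_cancel (card_le_card hCS)]

end Counting

variable {n : ℕ}

def pairElem (t : Fin (n / 2)) (e : Bool) : Fin n :=
  ⟨2 * t + e.toNat, by have := t.isLt; have := e.toNat_le; omega⟩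

theorem pairElem_inj {t t' : Fin (n / 2)} {e e' : Bool} (h : pairElem t e = pairElem t' e') :
    t = t' ∧ e = e' := by
  have h := Fin.val_eq_of_eq h
  cases e <;> cases e' <;> simp only [pairElem, Bool.toNat_false, Bool.toNat_true] at h <;>
    first | omega | exact ⟨Fin.ext (by omega), rfl⟩

def matchingPair (t : Fin (n / 2)) : Finset (Fin n) := {pairElem t false, pairElem t true}

theorem mem_matchingPair {t : Fin (n / 2)} {a : Fin n} :
    a ∈ matchingPair t ↔ (a : ℕ) / 2 = t := by
  simp only [matchingPair, pairElem, mem_insert, mem_singleton, Fin.ext_iff, Bool.toNat_false,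
    Bool.toNat_true]
  omega

theorem card_matchingPair (t : Fin (n / 2)) : #(matchingPair t) = 2 :=
  card_pair (by simp [pairElem, Fin.ext_iff])

theorem pairElem_mem_matchingPair (t : Fin (n / 2)) (e : Bool) :
    pairElem t e ∈ matchingPair t := by
  cases e <;> simp [matchingPair]

theorem matchingPair_injective : Function.Injective (matchingPair (n := n)) := fun t _ h =>
  Fin.ext <| (mem_matchingPair.mp (pairElem_mem_matchingPair t false)).symm.trans
    (mem_matchingPair.mp (h ▸ pairElem_mem_matchingPair t false))

theorem ne_of_pair_eq_matchingPair {i j : Fin n} {t : Fin (n / 2)}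
    (h : {i, j} = matchingPair t) : i ≠ j := by
  rintro rfl
  simpa [card_matchingPair] using congrArg card h

theorem eq_of_pair_eq_matchingPair {i j k : Fin n} {t t' : Fin (n / 2)}
    (h : {i, j} = matchingPair t) (h' : {i, k} = matchingPair t') : j = k := by
  have hi := mem_matchingPair.mp (h ▸ mem_insert_self i {j})
  have hi' := mem_matchingPair.mp (h' ▸ mem_insert_self i {k})
  have hj := mem_matchingPair.mp (h ▸ mem_insert_of_mem (mem_singleton_self j))
  have hk := mem_matchingPair.mp (h' ▸ mem_insert_of_mem (mem_singleton_self k))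
  have hij := Fin.val_ne_of_ne (ne_of_pair_eq_matchingPair h)
  have hik := Fin.val_ne_of_ne (ne_of_pair_eq_matchingPair h')
  exact Fin.ext (by omega)

theorem card_compl_matchingPair (t : Fin (n / 2)) : #(matchingPair t)ᶜ = n - 2 := by
  rw [card_compl, Fintype.card_fin, card_matchingPair]

def evenMatchingSquares (n : ℕ) : Finset (Sq n) :=
  (univ.sigma fun t : Fin (n / 2) => {K ∈ (matchingPair t)ᶜ.powerset | Even #K}).image
    fun s => (matchingPair s.1, s.2)

theorem exists_of_mem_evenMatchingSquares {x : Sq n} (hx : x ∈ evenMatchingSquares n) :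
    ∃ t, x.1 = matchingPair t ∧ Disjoint x.1 x.2 ∧ Even #x.2 := by
  obtain ⟨⟨t, K⟩, hK, rfl⟩ := mem_image.mp hx
  simp only [mem_sigma, mem_filter, mem_powerset, subset_compl_iff_disjoint_right] at hK
  exact ⟨t, rfl, hK.2.1.symm, hK.2.2⟩

theorem isGaussoid_of_subset_evenMatchingSquares {G : Finset (Sq n)}
    (hG : G ⊆ evenMatchingSquares n) : IsGaussoid n G := by
  have hU := fun {x} (hx : x ∈ G) => exists_of_mem_evenMatchingSquares (hG hx)
  refine ⟨fun x hx => ?_, fun i j k L _ _ hjk _ _ hkL => ?_⟩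
  · obtain ⟨t, ht, hd, -⟩ := hU hx
    exact ⟨ht ▸ card_matchingPair t, hd⟩
  have hpair : ∀ {a b K K'}, ({i, a}, K) ∈ G → ({i, b}, K') ∈ G → a = b := fun ha hb => by
    obtain ⟨t, ht, -⟩ := hU ha
    obtain ⟨t', ht', -⟩ := hU hb
    exact eq_of_pair_eq_matchingPair ht ht'
  refine ⟨fun h => absurd (hpair h.1 h.2) hjk, fun h => absurd (hpair h.1 h.2) hjk,
    fun h => absurd (hpair h.1 h.2) hjk, fun h => ?_⟩
  obtain ⟨-, -, -, hL⟩ := hU h.1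
  obtain ⟨-, -, -, hkL'⟩ := hU h.2
  rw [card_insert_of_notMem hkL, Nat.even_add_one] at hkL'
  exact absurd hL hkL'

theorem card_evenMatchingSquares (hn : 3 ≤ n) :
    n / 2 * 2 ^ (n - 3) ≤ #(evenMatchingSquares n) := by
  rw [evenMatchingSquares, card_image_of_injOn, card_sigma]
  · calc n / 2 * 2 ^ (n - 3) = ∑ t : Fin (n / 2), 2 ^ (#(matchingPair t)ᶜ - 1) := by
          simp [card_compl_matchingPair, Nat.sub_sub]
      _ ≤ _ := sum_le_sum fun t _ => two_pow_le_card_filter_even <| card_pos.mp <| by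
          rw [card_compl_matchingPair]; omega
  · rintro ⟨t, K⟩ - ⟨t', K'⟩ - h
    obtain ⟨ht, rfl⟩ := Prod.ext_iff.mp h
    cases matchingPair_injective ht
    rfl

theorem two_pow_card_evenMatchingSquares_le :
    2 ^ #(evenMatchingSquares n) ≤ Nat.card {G : Finset (Sq n) // IsGaussoid n G} := by
  rw [← card_powerset, ← Nat.card_eq_finsetCard]
  exact Nat.card_le_card_of_injective
    (fun G => ⟨G.1, isGaussoid_of_subset_evenMatchingSquares (mem_powerset.mp G.2)⟩)
    fun _ _ h => Subtype.ext (Subtype.mk.inj h)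

-- `⟨t, i, L⟩` is the quad with `j = 2t`, `k = 2t + 1`; requiring `i < j` puts every square in
-- at most one quad.
abbrev Quad (n : ℕ) := Σ _ : Fin (n / 2), Σ _ : Fin n, Finset (Fin n)

def quads (n : ℕ) : Finset (Quad n) :=
  univ.sigma fun t => (Iio (pairElem t false)).sigma fun i => (insert i (matchingPair t))ᶜ.powerset

theorem mem_quads {t : Fin (n / 2)} {i : Fin n} {L : Finset (Fin n)} :
    ⟨t, i, L⟩ ∈ quads n ↔ (i : ℕ) < 2 * t ∧ Disjoint (insert i (matchingPair t)) L := by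
  simp only [quads, mem_sigma, mem_univ, mem_Iio, mem_powerset, subset_compl_iff_disjoint_left,
    true_and, Fin.lt_def, pairElem, Bool.toNat_false, add_zero]

theorem card_quads : #(quads n) = n / 2 * (n / 2 - 1) * 2 ^ (n - 3) := by
  have hfibre : ∀ t : Fin (n / 2), ∀ i ∈ Iio (pairElem t false),
      #(insert i (matchingPair t))ᶜ.powerset = 2 ^ (n - 3) := by
    intro t i hi
    have hi : i ∉ matchingPair t := by
      rw [mem_Iio, Fin.lt_def] at hi
      rw [mem_matchingPair]
      simp only [pairElem, Bool.toNat_false, add_zero] at hi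
      omega
    rw [card_powerset, card_compl, card_insert_of_notMem hi, card_matchingPair, Fintype.card_fin]
  simp only [quads, card_sigma, sum_congr rfl (hfibre _), sum_const, Fin.card_Iio, smul_eq_mul]
  have hsum : ∑ t : Fin (n / 2), (pairElem t false : ℕ) = n / 2 * (n / 2 - 1) := by
    simp only [pairElem, Bool.toNat_false, add_zero]
    rw [Fin.sum_univ_eq_sum_range (2 * ·), ← mul_sum, mul_comm, sum_range_id_mul_two]
  rw [← sum_mul, hsum]

theorem pairElem_spec_of_mem_quads {t : Fin (n / 2)} {i : Fin n} {L : Finset (Fin n)}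
    (hq : ⟨t, i, L⟩ ∈ quads n) (e : Bool) :
    i < pairElem t e ∧ i ∉ L ∧ pairElem t e ∉ L := by
  obtain ⟨hi, hL⟩ := mem_quads.mp hq
  exact ⟨Fin.lt_def.mpr (by simp only [pairElem]; omega),
    disjoint_left.mp hL (mem_insert_self _ _),
    disjoint_left.mp hL (mem_insert_of_mem (pairElem_mem_matchingPair t e))⟩

-- The indices `(false, false), (false, true), (true, false), (true, true)` give
-- `(ij|L), (ij|Lk), (ik|L), (ik|Lj)`.
def quadSquare (q : Quad n) (r : Bool × Bool) : Sq n :=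
  ({q.2.1, pairElem q.1 r.1}, if r.2 then insert (pairElem q.1 !r.1) q.2.2 else q.2.2)

theorem quadSquare_injOn :
    Set.InjOn (Function.uncurry quadSquare) ((quads n ×ˢ univ : Finset (Quad n × (Bool × Bool))) :
      Set (Quad n × (Bool × Bool))) := by
  rintro ⟨⟨t, i, L⟩, e, b⟩ hq ⟨⟨t', i', L'⟩, e', b'⟩ hq' h
  simp only [coe_product, coe_univ, Set.mem_prod, mem_coe, Set.mem_univ, and_true] at hq hq'
  simp only [Function.uncurry_apply_pair, quadSquare, Prod.mk.injEq] at h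
  obtain ⟨hpair, hctx⟩ := h
  have hlt := (pairElem_spec_of_mem_quads hq e).1
  have hlt' := (pairElem_spec_of_mem_quads hq' e').1
  replace hpair : ({i, pairElem t e} : Set (Fin n)) = {i', pairElem t' e'} := by
    rw [← coe_pair, ← coe_pair, hpair]
  rcases Set.pair_eq_pair_iff.mp hpair with ⟨rfl, he⟩ | ⟨h1, h2⟩
  · obtain ⟨rfl, rfl⟩ := pairElem_inj he
    obtain ⟨hb, rfl⟩ := ite_insert_inj (pairElem_spec_of_mem_quads hq !e).2.2
      (pairElem_spec_of_mem_quads hq' !e).2.2 hctx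
    rw [Bool.coe_iff_coe.mp hb]
  · exact absurd (hlt.trans (h2 ▸ hlt')) (h1 ▸ lt_irrefl i)

-- The set `A_n` of all symbols `(ij|K)`.
def validSquares (n : ℕ) : Finset (Sq n) := {x | #x.1 = 2 ∧ Disjoint x.1 x.2}

theorem card_validSquares_le : #(validSquares n) ≤ n.choose 2 * 2 ^ (n - 2) := by
  have hmaps : ∀ x ∈ validSquares n, x.1 ∈ powersetCard 2 (univ : Finset (Fin n)) := by
    intro x hx
    simpa [validSquares] using (mem_filter.mp hx).2.1
  have hfibre : ∀ p ∈ powersetCard 2 (univ : Finset (Fin n)),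
      #{x ∈ validSquares n | x.1 = p} ≤ 2 ^ (n - 2) := by
    intro p hp
    calc #{x ∈ validSquares n | x.1 = p} ≤ #pᶜ.powerset := by
          refine card_le_card_of_injOn Prod.snd (fun x hx => ?_) fun x hx y hy h => ?_
          · simp only [validSquares, mem_coe, mem_filter, mem_univ, true_and] at hx
            rw [mem_coe, mem_powerset, ← hx.2]
            exact subset_compl_iff_disjoint_left.mpr hx.1.2
          · exact Prod.ext ((mem_filter.mp hx).2.trans (mem_filter.mp hy).2.symm) h
      _ = 2 ^ (n - 2) := by
          rw [card_powerset, card_compl, Fintype.card_fin, (mem_powersetCard.mp hp).2]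
  calc #(validSquares n) ≤ 2 ^ (n - 2) * #(powersetCard 2 (univ : Finset (Fin n))) :=
        card_le_mul_card_image_of_maps_to hmaps _ hfibre
    _ = n.choose 2 * 2 ^ (n - 2) := by rw [card_powersetCard, card_fin, mul_comm]

theorem quadSquare_mem_validSquares {q : Quad n} (hq : q ∈ quads n) (r : Bool × Bool) :
    quadSquare q r ∈ validSquares n := by
  obtain ⟨t, i, L⟩ := q
  obtain ⟨e, b⟩ := r
  obtain ⟨hlt, hi, he⟩ := pairElem_spec_of_mem_quads hq e
  obtain ⟨hlt', -, he'⟩ := pairElem_spec_of_mem_quads hq !e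
  have hne : pairElem t e ≠ pairElem t !e := fun h => by simpa using (pairElem_inj h).2
  simp only [validSquares, quadSquare, mem_filter, mem_univ, true_and]
  refine ⟨card_pair hlt.ne, ?_⟩
  split_ifs <;> simp [hi, he, hlt'.ne', hne.symm]

-- (G1)–(G3) on the four squares of a quad, indexed as in `quadSquare`.
def quadPatterns : Finset (Bool × Bool → Bool) :=
  {P | (P (false, false) ∧ P (true, true) → P (true, false) ∧ P (false, true)) ∧
    (P (false, true) ∧ P (true, true) → P (false, false) ∧ P (true, false)) ∧
    (P (false, false) ∧ P (true, false) → P (false, true) ∧ P (true, true))}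

theorem card_quadPatterns : #quadPatterns = 9 := by decide

theorem quadPattern_mem {G : Finset (Sq n)} (hG : IsGaussoid n G) {q : Quad n}
    (hq : q ∈ quads n) : (fun r => decide (quadSquare q r ∈ G)) ∈ quadPatterns := by
  obtain ⟨t, i, L⟩ := q
  obtain ⟨hj, hiL, hjL⟩ := pairElem_spec_of_mem_quads hq false
  obtain ⟨hk, -, hkL⟩ := pairElem_spec_of_mem_quads hq true
  have hjk : pairElem t false ≠ pairElem t true := fun h => by simpa using (pairElem_inj h).2
  obtain ⟨h1, h2, h3, -⟩ := hG.2 i _ _ L hj.ne hk.ne hjk hiL hjL hkL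
  simp only [quadPatterns, quadSquare, mem_filter, mem_univ, true_and, decide_eq_true_eq,
    Bool.not_false, Bool.not_true, Bool.false_eq_true, if_true, if_false]
  exact ⟨h1, h2, h3⟩

theorem natCard_mul_sixteen_pow_le :
    Nat.card {G : Finset (Sq n) // IsGaussoid n G} * 16 ^ #(quads n) ≤
      9 ^ #(quads n) * 2 ^ (n.choose 2 * 2 ^ (n - 2)) := by
  have h := natCard_mul_two_pow_le_of_patterns (validSquares n) (quads n) quadSquare
    quadSquare_injOn (fun _ hq r => quadSquare_mem_validSquares hq r)
    (fun _ hG x hx => mem_filter.mpr ⟨mem_univ _, hG.1 x hx⟩) quadPatterns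
    (fun _ hG _ hq => quadPattern_mem hG hq)
  have h16 : 2 ^ (#(quads n) * Fintype.card (Bool × Bool)) = 16 ^ #(quads n) := by
    rw [Fintype.card_prod, Fintype.card_bool, mul_comm, pow_mul]; rfl
  rw [h16, card_quadPatterns] at h
  exact h.trans (Nat.mul_le_mul_left _ (Nat.pow_le_pow_right two_pos card_validSquares_le))

theorem natCast_two_pow_sub_three (hn : 3 ≤ n) :
    ((2 ^ (n - 3) : ℕ) : ℝ) = 8 * (2 : ℝ) ^ ((n : ℝ) - 6) := by
  rw [show (n : ℝ) - 6 = ((n - 3 : ℕ) : ℝ) - 3 by push_cast [Nat.cast_sub hn]; ring,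
    Real.rpow_sub two_pos, Real.rpow_natCast]
  push_cast
  ring

theorem rpow_le_two_pow_half_mul (hn : 5 ≤ n) :
    (2 : ℝ) ^ ((1 / 3 : ℝ) * n * 2 ^ ((n : ℝ) - 6)) ≤ 2 ^ (n / 2 * 2 ^ (n - 3)) := by
  rw [← Real.rpow_natCast]
  refine Real.rpow_le_rpow_of_exponent_le one_le_two ?_
  have hm : (n : ℝ) ≤ 24 * (n / 2 : ℕ) := by exact_mod_cast (by omega : n ≤ 24 * (n / 2))
  have hx : (0 : ℝ) < 2 ^ ((n : ℝ) - 6) := by positivity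
  rw [Nat.cast_mul, natCast_two_pow_sub_three (by omega)]
  nlinarith

theorem ten_mul_le_mul_half (hn : 5 ≤ n) : 10 * (n * (n - 1)) ≤ 144 * (n / 2 * (n / 2 - 1)) := by
  obtain ⟨m, hm⟩ : ∃ m, n / 2 = m + 2 := ⟨n / 2 - 2, by omega⟩
  rw [hm, show m + 2 - 1 = m + 1 by omega]
  calc 10 * (n * (n - 1)) ≤ 10 * ((2 * m + 5) * (2 * m + 4)) := by gcongr <;> omega
    _ ≤ 144 * ((m + 2) * (m + 1)) := by nlinarith

theorem two_rpow_four_fifths_le : (2 : ℝ) ^ ((4 : ℝ) / 5) ≤ 16 / 9 := by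
  refine le_of_pow_le_pow_left₀ (n := 5) (by norm_num) (by norm_num) ?_
  rw [← Real.rpow_natCast, ← Real.rpow_mul zero_le_two]
  norm_num

theorem rpow_le_sixteen_div_nine_pow (hn : 5 ≤ n) {Q : ℕ}
    (hQ : n / 2 * (n / 2 - 1) * 2 ^ (n - 3) ≤ Q) :
    (2 : ℝ) ^ ((4 / 9 : ℝ) * n * (n - 1) * 2 ^ ((n : ℝ) - 6)) ≤ (16 / 9) ^ Q := by
  have hx : (0 : ℝ) < 2 ^ ((n : ℝ) - 6) := by positivity
  have hQ : ((n / 2 * (n / 2 - 1) : ℕ) : ℝ) * (8 * 2 ^ ((n : ℝ) - 6)) ≤ Q := by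
    rw [← natCast_two_pow_sub_three (by omega)]; exact_mod_cast hQ
  have hnm : 10 * ((n : ℝ) * (n - 1)) ≤ 144 * ((n / 2 * (n / 2 - 1) : ℕ) : ℝ) := by
    have := ten_mul_le_mul_half hn
    rw [← Nat.cast_pred (by omega)]
    exact_mod_cast this
  calc (2 : ℝ) ^ ((4 / 9 : ℝ) * n * (n - 1) * 2 ^ ((n : ℝ) - 6)) ≤ 2 ^ ((4 / 5 : ℝ) * Q) :=
        Real.rpow_le_rpow_of_exponent_le one_le_two (by nlinarith)
    _ = (2 ^ ((4 : ℝ) / 5)) ^ Q := by rw [Real.rpow_mul zero_le_two, Real.rpow_natCast]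
    _ ≤ (16 / 9) ^ Q := pow_le_pow_left₀ (by positivity) two_rpow_four_fifths_le Q

end Gaussoid

open Finset Gaussoid

/-- For `n ≥ 5`, the number of `n`-gaussoids is doubly exponentially large:
`2^{(1/3)·n·2^{n-6}} ≤ |𝔊_n| ≤ 2^{C(n,2)·2^{n-2}} / 2^{(4/9)·n(n-1)·2^{n-6}}`. -/
theorem stmt_15 (n : ℕ) (hn : 5 ≤ n) :
    (2 : ℝ) ^ ((1 / 3 : ℝ) * n * 2 ^ ((n : ℝ) - 6)) ≤
      (Nat.card {G : Finset (Sq n) // IsGaussoid n G} : ℝ) ∧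
    (Nat.card {G : Finset (Sq n) // IsGaussoid n G} : ℝ) ≤
      (2 : ℝ) ^ (n.choose 2 * 2 ^ (n - 2) : ℕ) /
        (2 : ℝ) ^ ((4 / 9 : ℝ) * n * (n - 1) * 2 ^ ((n : ℝ) - 6)) := by
  set N := Nat.card {G : Finset (Sq n) // IsGaussoid n G}
  set Q := #(quads n)
  constructor
  · calc (2 : ℝ) ^ ((1 / 3 : ℝ) * n * 2 ^ ((n : ℝ) - 6)) ≤ 2 ^ (n / 2 * 2 ^ (n - 3)) :=
          rpow_le_two_pow_half_mul hn
      _ ≤ 2 ^ #(evenMatchingSquares n) :=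
          pow_le_pow_right₀ one_le_two (card_evenMatchingSquares (by omega))
      _ ≤ N := by exact_mod_cast two_pow_card_evenMatchingSquares_le
  · have hN : (N : ℝ) * 16 ^ Q ≤ 9 ^ Q * 2 ^ (n.choose 2 * 2 ^ (n - 2)) := by
      exact_mod_cast natCard_mul_sixteen_pow_le
    rw [le_div_iff₀ (by positivity)]
    calc (N : ℝ) * 2 ^ ((4 / 9 : ℝ) * n * (n - 1) * 2 ^ ((n : ℝ) - 6)) ≤ N * (16 / 9) ^ Q := by
          gcongr
          exact rpow_le_sixteen_div_nine_pow hn card_quads.ge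
      _ ≤ _ := by
          rw [div_pow, mul_div_assoc', div_le_iff₀ (by positivity)]
          linarith
end
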